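/- arXiv:1806.00212 — 5 statements merged into one kernel-verified Lean document; each statement's English description precedes it below -/
import Mathlib

section
/- Let A : [1,∞) → (0,∞) be non-decreasing and set T(r) = ∫₁^r A(t)/t dt; assume T(r) → ∞ as r → ∞ and T(r) > e for all r in some interval [r₀,∞). Fix ε > 0 and 0 < δ < 1 and set φ_ε(r) = r/((log log T(r))^{1+ε} · log T(r)). Then there exists a set E_ε ⊆ [1,∞) of finite logarithmic measure such that for all r ∉ E_ε with r ≥ r₀, φ_ε(r) > 2^{1/(1−δ)} and φ_ε(r) < r, and for all R with r < R ≤ r + φ_ε(r)^δ, one has T(R) ≤ T(r) + 4e·(1/φ_ε(r))^{1−δ}·T(r). -/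
open MeasureTheory Filter Metric

/-- `log⁺ x = max(0, log x)` -/
noncomputable def logPlus (x : ℝ) : ℝ := max 0 (Real.log x)

/-- Nevanlinna proximity function `m(r, f)`. -/
noncomputable def nevProx (f : ℂ → ℂ) (r : ℝ) : ℝ :=
  (2 * Real.pi)⁻¹ * ∫ θ in (0:ℝ)..(2 * Real.pi), logPlus ‖f (r * Complex.exp (θ * Complex.I))‖

open scoped Classical in
/-- Multiplicity of `z` as a pole of `f`. -/
noncomputable def poleMult (f : ℂ → ℂ) (z : ℂ) : ℕ :=
  if h : MeromorphicAt f z then (-(WithTop.untopD 0 (meromorphicOrderAt f z))).toNat else 0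

/-- Unintegrated counting function `n(t, f)`: number of poles in the closed disc of
radius `t`, counted with multiplicity. -/
noncomputable def poleCnt (f : ℂ → ℂ) (t : ℝ) : ℝ :=
  ∑' z : ℂ, (closedBall (0:ℂ) t).indicator (fun u => (poleMult f u : ℝ)) z

/-- Integrated counting function `N(r, f)` of poles. -/
noncomputable def nevCount (f : ℂ → ℂ) (r : ℝ) : ℝ :=
  (∫ t in (0:ℝ)..r, (poleCnt f t - poleCnt f 0) / t) + poleCnt f 0 * Real.log r

/-- Nevanlinna characteristic `T(r, f) = m(r, f) + N(r, f)`. -/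
noncomputable def nevChar (f : ℂ → ℂ) (r : ℝ) : ℝ := nevProx f r + nevCount f r

/-- `f` is a rational function. -/
def IsRationalFn (f : ℂ → ℂ) : Prop :=
  ∃ p q : Polynomial ℂ, q ≠ 0 ∧ ∀ z : ℂ, q.eval z ≠ 0 → f z = p.eval z / q.eval z

/-- `E ⊆ [1, ∞)` has zero lower density. -/
def ZeroLowerDensity (E : Set ℝ) : Prop :=
  Filter.liminf (fun r => (volume (E ∩ Set.Icc 1 r)).toReal / r) Filter.atTop = 0

/-- `E ⊆ [1, ∞)` has zero upper density. -/
def ZeroUpperDensity (E : Set ℝ) : Prop :=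
  Filter.limsup (fun r => (volume (E ∩ Set.Icc 1 r)).toReal / r) Filter.atTop = 0

/-- `E` has finite logarithmic measure: `∫_E dt/t < ∞`. -/
def FiniteLogMeasure (E : Set ℝ) : Prop :=
  ∫⁻ t in E, ENNReal.ofReal t⁻¹ < ⊤

/-!
Let `E` be the set of `r ≥ r₀` at which `T` grows by more than the factor `1 + η`,
`η = 4e φ^(δ-1)`, over `[r, r + h]` with `h = φ^δ`; off `E` the claim follows from the
monotonicity of `T`. For `r ∈ E` the relative length `h / r = φ^(δ-1) / (log T (log log T)^(1+ε))`
is at most a constant times the increase of the bounded monotone function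
`Ψ = -(log log T)^(-ε)` over `[r, r + h]`, since `log log T` increases by about `η / log T`
there. A greedy Borel covering of `E` by such intervals then bounds its logarithmic measure by a
geometric series plus the total increase of `Ψ`.
-/

open Set Real

lemma FiniteLogMeasure.mono {E F : Set ℝ} (hEF : E ⊆ F) (hF : FiniteLogMeasure F) :
    FiniteLogMeasure E :=
  (lintegral_mono_set hEF).trans_lt hF

lemma FiniteLogMeasure.union {E F : Set ℝ} (hE : FiniteLogMeasure E) (hF : FiniteLogMeasure F) :
    FiniteLogMeasure (E ∪ F) :=
  (lintegral_union_le _ _ _).trans_lt (ENNReal.add_lt_top.2 ⟨hE, hF⟩)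

lemma setLIntegral_inv_Icc_le {a b : ℝ} (ha : 0 < a) :
    ∫⁻ t in Icc a b, ENNReal.ofReal t⁻¹ ≤ ENNReal.ofReal ((b - a) / a) :=
  calc ∫⁻ t in Icc a b, ENNReal.ofReal t⁻¹
      ≤ ∫⁻ _ in Icc a b, ENNReal.ofReal a⁻¹ :=
        setLIntegral_mono measurable_const fun t ht ↦ ENNReal.ofReal_le_ofReal (inv_anti₀ ha ht.1)
    _ = ENNReal.ofReal ((b - a) / a) := by
        rw [setLIntegral_const, Real.volume_Icc, ← ENNReal.ofReal_mul (inv_nonneg.2 ha.le),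
          div_eq_inv_mul]

lemma finiteLogMeasure_Icc {a : ℝ} (ha : 0 < a) (b : ℝ) : FiniteLogMeasure (Icc a b) :=
  (setLIntegral_inv_Icc_le ha).trans_lt ENNReal.ofReal_lt_top

lemma finiteLogMeasure_of_subset_iUnion {E : Set ℝ} {S : ℕ → Set ℝ} {f : ℕ → ℝ}
    (hES : E ⊆ ⋃ n, S n) (hS : ∀ n, ∫⁻ t in S n, ENNReal.ofReal t⁻¹ ≤ ENNReal.ofReal (f n))
    (hf0 : ∀ n, 0 ≤ f n) (hf : Summable f) : FiniteLogMeasure E :=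
  calc ∫⁻ t in E, ENNReal.ofReal t⁻¹
      ≤ ∑' n, ∫⁻ t in S n, ENNReal.ofReal t⁻¹ :=
        (lintegral_mono_set hES).trans (lintegral_iUnion_le _ _)
    _ ≤ ∑' n, ENNReal.ofReal (f n) := ENNReal.tsum_le_tsum hS
    _ = ENNReal.ofReal (∑' n, f n) := (ENNReal.ofReal_tsum_of_nonneg hf0 hf).symm
    _ < ⊤ := ENNReal.ofReal_lt_top

lemma exists_mem_Ico_of_natCast_le {b : ℕ → ℝ} (hb : ∀ n : ℕ, (n : ℝ) ≤ b n) {r : ℝ}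
    (hr : b 0 ≤ r) : ∃ n, r ∈ Ico (b n) (b (n + 1)) := by
  have hex : ∃ n, r < b (n + 1) := ⟨⌈r⌉₊, by
    have := hb (⌈r⌉₊ + 1)
    push_cast at this
    linarith [Nat.le_ceil r]⟩
  refine ⟨Nat.find hex, ?_, Nat.find_spec hex⟩
  rcases hn : Nat.find hex with _ | n
  · exact hr
  · exact not_lt.1 (Nat.find_min hex (hn ▸ n.lt_succ_self))

section Covering

variable {E : Set ℝ} {h Ψ : ℝ → ℝ}

lemma exists_setLIntegral_inv_inter_Ico_le (hE : E ⊆ Ici 1) (hΨ : Monotone Ψ)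
    (hh : ∀ r ∈ E, 1 ≤ h r) (hjump : ∀ r ∈ E, h r / r ≤ Ψ (r + h r) - Ψ r)
    {s : ℝ} (hs0 : 0 < s) (hs1 : s ≤ 1) (b : ℝ) :
    ∃ b', b + 1 ≤ b' ∧
      ∫⁻ t in E ∩ Ico b b', ENNReal.ofReal t⁻¹ ≤ ENNReal.ofReal (s + 2 * (Ψ b' - Ψ b)) := by
  by_cases hne : (E ∩ Ici b).Nonempty
  swap
  · refine ⟨b + 1, le_rfl, ?_⟩
    have hempty : E ∩ Ico b (b + 1) = ∅ :=
      not_nonempty_iff_eq_empty.1 fun ⟨t, ht⟩ ↦ hne ⟨t, ht.1, ht.2.1⟩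
    simp [hempty]
  set c := sInf (E ∩ Ici b)
  have hc_lb : ∀ t ∈ E ∩ Ici b, c ≤ t := fun t ht ↦ csInf_le ⟨b, fun _ hx ↦ hx.2⟩ ht
  have hc1 : 1 ≤ c := le_csInf hne fun t ht ↦ hE ht.1
  obtain ⟨p, ⟨hpE, hbp : b ≤ p⟩, hpc⟩ := Real.lt_sInf_add_pos hne hs0
  refine ⟨p + h p, by linarith [hh p hpE], ?_⟩
  have hcover : E ∩ Ico b (p + h p) ⊆ Icc c (p + h p) :=
    fun t ht ↦ ⟨hc_lb t ⟨ht.1, ht.2.1⟩, ht.2.2.le⟩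
  refine (lintegral_mono_set hcover).trans
    ((setLIntegral_inv_Icc_le (by linarith)).trans (ENNReal.ofReal_le_ofReal ?_))
  have hcp : c ≤ p := hc_lb p ⟨hpE, hbp⟩
  have hh0 : 0 ≤ h p := by linarith [hh p hpE]
  -- `p` lies within `s ≤ 1 ≤ c` of `c`, so `p ≤ 2 c`
  have hhc : h p / c ≤ 2 * (h p / p) :=
    calc h p / c = 2 * h p / (2 * c) := by field_simp
      _ ≤ 2 * h p / p := div_le_div_of_nonneg_left (by positivity) (by linarith) (by linarith)
      _ = 2 * (h p / p) := mul_div_assoc _ _ _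
  have hpc' : (p - c) / c ≤ s := by
    rw [div_le_iff₀ (by linarith)]; nlinarith
  calc (p + h p - c) / c = (p - c) / c + h p / c := by ring
    _ ≤ s + 2 * (Ψ (p + h p) - Ψ p) := by linarith [hjump p hpE]
    _ ≤ s + 2 * (Ψ (p + h p) - Ψ b) := by linarith [hΨ hbp]

theorem finiteLogMeasure_of_div_le_sub (hE : E ⊆ Ici 1) (hΨ : Monotone Ψ) (hΨB : BddAbove (range Ψ))
    (hh : ∀ r ∈ E, 1 ≤ h r) (hjump : ∀ r ∈ E, h r / r ≤ Ψ (r + h r) - Ψ r) :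
    FiniteLogMeasure E := by
  obtain ⟨B, hB⟩ := hΨB
  choose next hnext_ge hnext using fun (n : ℕ) (b : ℝ) ↦
    exists_setLIntegral_inv_inter_Ico_le hE hΨ hh hjump (s := (1 / 2) ^ n) (by positivity)
      (pow_le_one₀ (by norm_num) (by norm_num)) b
  let b : ℕ → ℝ := fun n ↦ Nat.rec 1 (fun n bn ↦ next n bn) n
  have hb_succ (n : ℕ) : b (n + 1) = next n (b n) := rfl
  have hb_ge (n : ℕ) : (n : ℝ) ≤ b n := by
    induction n with
    | zero => simp [b]
    | succ n ih => push_cast; linarith [hb_succ n ▸ hnext_ge n (b n)]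
  set f : ℕ → ℝ := fun n ↦ (1 / 2) ^ n + 2 * (Ψ (b (n + 1)) - Ψ (b n))
  have hf0 (n : ℕ) : 0 ≤ f n := by
    have := hΨ (show b n ≤ b (n + 1) by linarith [hb_succ n ▸ hnext_ge n (b n)])
    positivity
  have hf_sum (N : ℕ) : ∑ n ∈ Finset.range N, f n ≤ 2 + 2 * (B - Ψ 1) := by
    have := hB ⟨b N, rfl⟩
    rw [Finset.sum_add_distrib, ← Finset.mul_sum, Finset.sum_range_sub (fun n ↦ Ψ (b n))]
    change _ + 2 * (Ψ (b N) - Ψ 1) ≤ _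
    linarith [sum_geometric_two_le N]
  refine finiteLogMeasure_of_subset_iUnion (S := fun n ↦ E ∩ Ico (b n) (b (n + 1))) (f := f)
    (fun r hr ↦ ?_) (fun n ↦ hnext n (b n)) hf0 (summable_of_sum_range_le hf0 hf_sum)
  obtain ⟨n, hn⟩ := exists_mem_Ico_of_natCast_le hb_ge (r := r) (hE hr)
  exact mem_iUnion.2 ⟨n, hr, hn⟩

end Covering

lemma mul_sub_div_rpow_le_rpow_neg_sub {x y ε : ℝ} (hx : 0 < x) (hxy : x ≤ y) (hε : 0 ≤ ε) :
    ε * (y - x) / y ^ (1 + ε) ≤ x ^ (-ε) - y ^ (-ε) := by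
  have hy : 0 < y := hx.trans_le hxy
  have hbernoulli : 1 + ε * (1 - x / y) ≤ (x / y) ^ (-ε) := by
    rw [rpow_def_of_pos (div_pos hx hy)]
    nlinarith [add_one_le_exp (log (x / y) * -ε), log_le_sub_one_of_pos (div_pos hx hy)]
  calc ε * (y - x) / y ^ (1 + ε) = ε * (1 - x / y) * y ^ (-ε) := by
        rw [rpow_add hy, rpow_one, rpow_neg hy.le]; field_simp
    _ ≤ ((x / y) ^ (-ε) - 1) * y ^ (-ε) := by gcongr; linarith
    _ = x ^ (-ε) - y ^ (-ε) := by
        rw [div_rpow hx.le hy.le, sub_mul, div_mul_cancel₀ _ (rpow_pos_of_pos hy _).ne', one_mul]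

lemma one_le_log_log {x : ℝ} (hx : exp (exp 1) ≤ x) : 1 ≤ log (log x) := by
  have hx0 : 0 < x := (exp_pos _).trans_le hx
  have hlog : exp 1 ≤ log x := (le_log_iff_exp_le hx0).2 hx
  exact (le_log_iff_exp_le ((exp_pos 1).trans_le hlog)).2 hlog

lemma antitoneOn_rpow_neg_log_log {ε : ℝ} (hε : 0 ≤ ε) :
    AntitoneOn (fun x ↦ log (log x) ^ (-ε)) (Ici (exp (exp 1))) := by
  intro x hx y _ hxy
  have hx0 : 0 < x := (exp_pos _).trans_le hx
  have hlogx : 0 < log x := (exp_pos 1).trans_le ((le_log_iff_exp_le hx0).2 hx)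
  exact rpow_le_rpow_of_nonpos (by linarith [one_le_log_log hx])
    (log_le_log hlogx (log_le_log hx0 hxy)) (neg_nonpos.2 hε)

lemma div_log_mul_rpow_le_rpow_neg_log_log_sub {ε η x y : ℝ} (hε : 0 < ε)
    (hx : exp (exp 1) ≤ x) (hη0 : 0 ≤ η) (hη : η ≤ 2 * exp 1) (hxy : (1 + η) * x ≤ y) :
    η / (log x * log (log x) ^ (1 + ε)) ≤
      14 * 2 ^ (1 + ε) / ε * (log (log x) ^ (-ε) - log (log y) ^ (-ε)) := by
  have he : 2.7 < exp 1 := lt_trans (by norm_num) exp_one_gt_d9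
  have hx0 : 0 < x := (exp_pos _).trans_le hx
  set u := log x
  have hu : exp 1 ≤ u := (le_log_iff_exp_le hx0).2 hx
  set w := log u
  have hw : 1 ≤ w := one_le_log_log hx
  set ℓ := log (1 + η)
  have hℓ7 : η / 7 ≤ ℓ :=
    calc η / 7 ≤ η / (1 + η) :=
          div_le_div_of_nonneg_left hη0 (by linarith) (by linarith [exp_one_lt_d9])
      _ = 1 - (1 + η)⁻¹ := by field_simp; ring
      _ ≤ ℓ := one_sub_inv_le_log_of_pos (by linarith)
  have hℓ2 : ℓ ≤ 2 := by
    rw [log_le_iff_le_exp (by linarith), show (2 : ℝ) = 1 + 1 by norm_num, exp_add]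
    nlinarith
  have hℓ0 : 0 ≤ ℓ := by linarith [div_nonneg hη0 (by norm_num : (0 : ℝ) ≤ 7)]
  have hu0 : 0 < u := by linarith
  have huℓ : 0 < u + ℓ := by linarith
  set w' := log (u + ℓ)
  have hww' : w ≤ w' := log_le_log (by linarith) (by linarith)
  have hw'y : log (log y) ^ (-ε) ≤ w' ^ (-ε) := by
    have hlogy : u + ℓ ≤ log y :=
      calc u + ℓ = log ((1 + η) * x) := by rw [log_mul (by linarith) hx0.ne']; ring
        _ ≤ log y := log_le_log (by positivity) hxy
    exact rpow_le_rpow_of_nonpos (by linarith) (log_le_log (by linarith) hlogy) (by linarith)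
  have hgap : η / (14 * u) ≤ w' - w :=
    calc η / (14 * u) = (η / 7) / (2 * u) := by field_simp; ring
      _ ≤ ℓ / (2 * u) := by gcongr
      _ ≤ ℓ / (u + ℓ) := div_le_div_of_nonneg_left hℓ0 (by linarith) (by linarith)
      _ = 1 - ((u + ℓ) / u)⁻¹ := by field_simp; ring_nf
      _ ≤ log ((u + ℓ) / u) := one_sub_inv_le_log_of_pos (div_pos (by linarith) (by linarith))
      _ = w' - w := log_div (by linarith) (by linarith)
  have hw'2 : w' ≤ 2 * w :=
    calc w' ≤ log (u * u) := log_le_log (by linarith) (by nlinarith)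
      _ = 2 * w := by rw [log_mul (by linarith) (by linarith)]; ring
  have hw'0 : 0 < w' := by linarith
  -- mean value bound for `t ↦ t ^ (-ε)` on `[w, w'] ⊆ [w, 2 w]`
  calc η / (u * w ^ (1 + ε))
      = 14 * 2 ^ (1 + ε) / ε * (ε * (η / (14 * u)) / (2 * w) ^ (1 + ε)) := by
        rw [mul_rpow (by norm_num) (by linarith)]; field_simp
    _ ≤ 14 * 2 ^ (1 + ε) / ε * (ε * (w' - w) / w' ^ (1 + ε)) := by
        gcongr
    _ ≤ 14 * 2 ^ (1 + ε) / ε * (w ^ (-ε) - w' ^ (-ε)) := by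
        gcongr; exact mul_sub_div_rpow_le_rpow_neg_sub (by linarith) hww' hε.le
    _ ≤ 14 * 2 ^ (1 + ε) / ε * (w ^ (-ε) - log (log y) ^ (-ε)) := by gcongr

lemma rpow_div_le_rpow_neg_log_log_sub {ε δ φ p x y : ℝ} (hε : 0 < ε) (hδ1 : δ < 1)
    (hx : exp (exp 1) ≤ x) (hφ : 2 ^ (1 / (1 - δ)) < φ)
    (hφp : φ = p / (log (log x) ^ (1 + ε) * log x))
    (hxy : x + 4 * exp 1 * (1 / φ) ^ (1 - δ) * x < y) :
    φ ^ δ / p ≤ 14 * 2 ^ (1 + ε) / ε * (log (log x) ^ (-ε) - log (log y) ^ (-ε)) := by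
  have hφ0 : 0 < φ := (rpow_pos_of_pos two_pos _).trans hφ
  have hx0 : 0 < x := (exp_pos _).trans_le hx
  have hlogx : exp 1 ≤ log x := (le_log_iff_exp_le hx0).2 hx
  have hD : 0 < log (log x) ^ (1 + ε) * log x :=
    mul_pos (rpow_pos_of_pos (by linarith [one_le_log_log hx]) _) ((exp_pos 1).trans_le hlogx)
  set q := (1 / φ) ^ (1 - δ)
  have hq0 : 0 ≤ q := by positivity
  have hq : q ≤ 1 / 2 :=
    calc q ≤ (1 / 2 ^ (1 - δ)⁻¹) ^ (1 - δ) := by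
          rw [← one_div]
          exact rpow_le_rpow (by positivity) (one_div_le_one_div_of_le (by positivity) hφ.le)
            (by linarith)
      _ = 1 / 2 := by
          rw [div_rpow zero_le_one (by positivity), one_rpow,
            rpow_inv_rpow zero_le_two (by linarith)]
  have hp : φ ^ δ / p = q / (log (log x) ^ (1 + ε) * log x) := by
    have hq_eq : q = φ ^ (δ - 1) := by
      show (1 / φ) ^ (1 - δ) = _
      rw [one_div, inv_rpow hφ0.le, ← rpow_neg hφ0.le, neg_sub]
    rw [eq_div_iff hD.ne'] at hφp
    rw [← hφp, ← div_div, ← rpow_sub_one hφ0.ne', hq_eq]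
  calc φ ^ δ / p = q / (log (log x) ^ (1 + ε) * log x) := hp
    _ ≤ 4 * exp 1 * q / (log x * log (log x) ^ (1 + ε)) := by
        rw [mul_comm (log x)]
        gcongr
        exact le_mul_of_one_le_left hq0 (by linarith [exp_one_gt_d9])
    _ ≤ _ := div_log_mul_rpow_le_rpow_neg_log_log_sub hε hx (by positivity)
        (by nlinarith [exp_pos 1]) (by linarith)

lemma intervalIntegrable_div_self_of_monotoneOn {A : ℝ → ℝ} {a b : ℝ} (ha : 0 < a)
    (hA : MonotoneOn A (Ici a)) (hab : a ≤ b) :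
    IntervalIntegrable (fun t ↦ A t / t) volume a b := by
  have hsub : uIcc a b ⊆ Ici a := by
    rw [uIcc_of_le hab]; exact Icc_subset_Ici_self
  simpa only [div_eq_mul_inv] using (hA.mono hsub).intervalIntegrable.mul_continuousOn
    (continuousOn_inv₀.mono fun t ht ↦ (ha.trans_le (hsub ht)).ne')

lemma monotoneOn_intervalIntegral_of_nonneg {f : ℝ → ℝ} {a : ℝ} (hf0 : ∀ t, a ≤ t → 0 ≤ f t)
    (hfi : ∀ b, a ≤ b → IntervalIntegrable f volume a b) :
    MonotoneOn (fun r ↦ ∫ t in a..r, f t) (Ici a) :=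
  fun _ hx y hy hxy ↦ intervalIntegral.integral_mono_interval le_rfl hx hxy
    ((ae_restrict_iff' measurableSet_Ioc).2 (Eventually.of_forall fun t ht ↦ hf0 t ht.1.le))
    (hfi y hy)

lemma finiteLogMeasure_of_div_le_rpow_neg_log_log_sub {E : Set ℝ} {T h : ℝ → ℝ} {M K ε : ℝ}
    (hM : 1 ≤ M) (hT : MonotoneOn T (Ici 1)) (hTM : ∀ r, M ≤ r → exp (exp 1) ≤ T r)
    (hK : 0 ≤ K) (hε : 0 ≤ ε) (hE : E ⊆ Ici M) (hh : ∀ r ∈ E, 1 ≤ h r)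
    (hjump : ∀ r ∈ E,
      h r / r ≤ K * (log (log (T r)) ^ (-ε) - log (log (T (r + h r))) ^ (-ε))) :
    FiniteLogMeasure E := by
  let Ψ : ℝ → ℝ := fun r ↦ -(K * log (log (T (max r M))) ^ (-ε))
  have hΨ : Monotone Ψ := fun a b hab ↦ by
    have hMa : M ≤ max a M := le_max_right _ _
    have hab' : max a M ≤ max b M := max_le_max_right _ hab
    exact neg_le_neg (mul_le_mul_of_nonneg_left (antitoneOn_rpow_neg_log_log hε
      (hTM _ hMa) (hTM _ (hMa.trans hab')) (hT (hM.trans hMa) (hM.trans (hMa.trans hab')) hab'))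
      hK)
  have hΨB : BddAbove (range Ψ) := ⟨0, by
    rintro _ ⟨r, rfl⟩
    have := one_le_log_log (hTM _ (le_max_right r M))
    exact neg_nonpos.2 (by positivity)⟩
  refine finiteLogMeasure_of_div_le_sub (fun r hr ↦ hM.trans (hE hr)) hΨ hΨB hh fun r hr ↦ ?_
  have hrM : M ≤ r := hE hr
  have hrM' : M ≤ r + h r := by linarith [hh r hr]
  simp only [Ψ, max_eq_left hrM, max_eq_left hrM']
  linarith [hjump r hr]

theorem growth_lemma_integral_mean_general
    (A : ℝ → ℝ) (hApos : ∀ t : ℝ, 1 ≤ t → 0 < A t) (hAmono : MonotoneOn A (Set.Ici 1))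
    (T : ℝ → ℝ) (hT : ∀ r : ℝ, T r = ∫ t in (1:ℝ)..r, A t / t)
    (htop : Filter.Tendsto T Filter.atTop Filter.atTop)
    (r₀ : ℝ) (hr₀ : 1 ≤ r₀)
    (ε : ℝ) (hε : 0 < ε) (δ : ℝ) (hδ0 : 0 < δ) (hδ1 : δ < 1)
    (φ : ℝ → ℝ)
    (hφ : ∀ r : ℝ, φ r = r / ((Real.log (Real.log (T r))) ^ (1 + ε) * Real.log (T r))) :
    ∃ E : Set ℝ, E ⊆ Set.Ici 1 ∧ FiniteLogMeasure E ∧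
      ∀ r : ℝ, r ∉ E → r₀ ≤ r → (2:ℝ) ^ (1 / (1 - δ)) < φ r → φ r < r →
        ∀ R : ℝ, r < R → R ≤ r + φ r ^ δ →
          T R ≤ T r + 4 * Real.exp 1 * (1 / φ r) ^ (1 - δ) * T r := by
  have hTmono : MonotoneOn T (Ici 1) := by
    rw [funext hT]
    exact monotoneOn_intervalIntegral_of_nonneg
      (fun t ht ↦ div_nonneg (hApos t ht).le (by linarith))
      fun b hb ↦ intervalIntegrable_div_self_of_monotoneOn one_pos hAmono hb
  obtain ⟨M, hM⟩ := eventually_atTop.1 (htop.eventually_ge_atTop (exp (exp 1)))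
  set E := {r | r₀ ≤ r ∧ 2 ^ (1 / (1 - δ)) < φ r ∧
    T r + 4 * exp 1 * (1 / φ r) ^ (1 - δ) * T r < T (r + φ r ^ δ)}
  have hφ_ge (r : ℝ) (hr : r ∈ E) : 1 ≤ φ r ^ δ :=
    one_le_rpow ((one_le_rpow one_le_two (by rw [one_div_nonneg]; linarith)).trans hr.2.1.le)
      hδ0.le
  refine ⟨E, fun r hr ↦ hr₀.trans hr.1, ?_, fun r hrE hr₀r hφr _ R hrR hRle ↦ ?_⟩
  · have hcover : E ⊆ Icc 1 (max M 1) ∪ E ∩ Ici (max M 1) := fun r hr ↦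
      (le_or_gt r _).imp (fun h ↦ ⟨hr₀.trans hr.1, h⟩) fun h ↦ ⟨hr, h.le⟩
    have hTM (r : ℝ) (hr : max M 1 ≤ r) : exp (exp 1) ≤ T r := hM r ((le_max_left _ _).trans hr)
    refine ((finiteLogMeasure_Icc one_pos _).union
      (finiteLogMeasure_of_div_le_rpow_neg_log_log_sub (K := 14 * 2 ^ (1 + ε) / ε)
        (le_max_right M 1) hTmono hTM (by positivity) hε.le inter_subset_right
        (fun r hr ↦ hφ_ge r hr.1) fun r hr ↦ ?_)).mono hcover
    exact rpow_div_le_rpow_neg_log_log_sub hε hδ1 (hTM r hr.2) hr.1.2.1 (hφ r) hr.1.2.2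
  · have hR : R ∈ Ici 1 := by simp only [mem_Ici]; linarith
    exact (hTmono hR (by simp only [mem_Ici]; linarith) hRle).trans
      (not_lt.1 fun h ↦ hrE ⟨hr₀r, hφr, h⟩)

theorem growth_lemma_integral_mean
    (A : ℝ → ℝ) (hApos : ∀ t : ℝ, 1 ≤ t → 0 < A t) (hAmono : MonotoneOn A (Set.Ici 1))
    (T : ℝ → ℝ) (hT : ∀ r : ℝ, T r = ∫ t in (1:ℝ)..r, A t / t)
    (htop : Filter.Tendsto T Filter.atTop Filter.atTop)
    (r₀ : ℝ) (hr₀ : 1 ≤ r₀) (hTe : ∀ r : ℝ, r₀ ≤ r → Real.exp 1 < T r)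
    (ε : ℝ) (hε : 0 < ε) (δ : ℝ) (hδ0 : 0 < δ) (hδ1 : δ < 1)
    (φ : ℝ → ℝ)
    (hφ : ∀ r : ℝ, φ r = r / ((Real.log (Real.log (T r))) ^ (1 + ε) * Real.log (T r))) :
    ∃ E : Set ℝ, E ⊆ Set.Ici 1 ∧ FiniteLogMeasure E ∧
      ∀ r : ℝ, r ∉ E → r₀ ≤ r → (2:ℝ) ^ (1 / (1 - δ)) < φ r → φ r < r →
        ∀ R : ℝ, r < R → R ≤ r + φ r ^ δ →
          T R ≤ T r + 4 * Real.exp 1 * (1 / φ r) ^ (1 - δ) * T r :=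
  growth_lemma_integral_mean_general A hApos hAmono T hT htop r₀ hr₀ ε hε δ hδ0 hδ1 φ hφ
end

section
/- Let A : [1,∞) → (0,∞) be non-decreasing and set T(r) = ∫₁^r A(t)/t dt; assume T(r) → ∞ and that T has finite order ρ = limsup_{r→∞} (log T(r))/(log r) < ∞. Then for every h > 0 and K > 1 there exists a set E ⊆ [1,∞) whose upper logarithmic density limsup_{r→∞} (1/log r)·∫_{E∩[1,r]} dt/t is at most ρ·(log 2)/(log K), such that T(r + h) ≤ T(r) + 4hK·T(r)/r for all sufficiently large r ∉ E. -/
open MeasureTheory Filter Metric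

/-!
Let `E` be the set of large `t` with `T(2t) > K T(t)`. On `E` the function `log T` gains at
least `log K` from `t` to `2t`, and `∫_R^r (log T(2t) - log T(t)) dt/t ≤ log 2 · log T(2r)`, so
the logarithmic measure of `E ∩ [1, r]` is at most `log 2 · log T(2r) / log K`; dividing by
`log r` gives the density bound `ρ log 2 / log K`. Off `E`, monotonicity of `A` gives
`A(r + h) log (2r / (r + h)) ≤ T(2r) ≤ K T(r)`, hence `A(r + h) ≤ 3 K T(r)` once `r ≥ 3h`, while
`T(r + h) - T(r) ≤ h A(r + h) / r`.
-/

open Set Real Topology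

section IntegralDivSelf

variable {A : ℝ → ℝ} {a b : ℝ}

theorem intervalIntegrable_div_self (hA : MonotoneOn A (Icc a b)) (ha : 0 < a) (hab : a ≤ b) :
    IntervalIntegrable (fun t => A t / t) volume a b := by
  rw [← uIcc_of_le hab] at hA
  have hinv : ContinuousOn (fun t : ℝ => t⁻¹) (uIcc a b) :=
    continuousOn_inv₀.mono fun t ht => (ha.trans_le (uIcc_of_le hab ▸ ht).1).ne'
  simpa only [div_eq_mul_inv] using hA.intervalIntegrable.mul_continuousOn hinv

theorem mul_log_div_le_integral_div_self (hA : MonotoneOn A (Icc a b)) (ha : 0 < a)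
    (hab : a ≤ b) : A a * log (b / a) ≤ ∫ t in a..b, A t / t := by
  rw [← integral_inv_of_pos ha (ha.trans_le hab), ← intervalIntegral.integral_const_mul]
  refine intervalIntegral.integral_mono_on hab ?_ (intervalIntegrable_div_self hA ha hab)
    fun t ht => div_le_div_of_nonneg_right (hA ⟨le_rfl, hab⟩ ht ht.1) (ha.trans_le ht.1).le
  exact intervalIntegrable_div_self (monotoneOn_const (c := A a)) ha hab

theorem integral_div_self_le_mul_log_div (hA : MonotoneOn A (Icc a b)) (ha : 0 < a)
    (hab : a ≤ b) : ∫ t in a..b, A t / t ≤ A b * log (b / a) := by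
  rw [← integral_inv_of_pos ha (ha.trans_le hab), ← intervalIntegral.integral_const_mul]
  refine intervalIntegral.integral_mono_on hab (intervalIntegrable_div_self hA ha hab) ?_
    fun t ht => div_le_div_of_nonneg_right (hA ht ⟨hab, le_rfl⟩ ht.2) (ha.trans_le ht.1).le
  exact intervalIntegrable_div_self (monotoneOn_const (c := A b)) ha hab

end IntegralDivSelf

noncomputable def logIntegral (A : ℝ → ℝ) (r : ℝ) : ℝ := ∫ t in (1 : ℝ)..r, A t / t

section LogIntegral

variable {A : ℝ → ℝ} {a b : ℝ}

theorem logIntegral_sub (hA : MonotoneOn A (Ici 1)) (ha : 1 ≤ a) (hab : a ≤ b) :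
    logIntegral A b - logIntegral A a = ∫ t in a..b, A t / t :=
  intervalIntegral.integral_interval_sub_left
    (intervalIntegrable_div_self (hA.mono Icc_subset_Ici_self) one_pos (ha.trans hab))
    (intervalIntegrable_div_self (hA.mono Icc_subset_Ici_self) one_pos ha)

theorem monotoneOn_logIntegral (hA₀ : ∀ t, 1 ≤ t → 0 ≤ A t) (hA : MonotoneOn A (Ici 1)) :
    MonotoneOn (logIntegral A) (Ici 1) := fun a ha b _ hab => by
  rw [← sub_nonneg, logIntegral_sub hA ha hab]
  exact intervalIntegral.integral_nonneg hab fun t ht =>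
    div_nonneg (hA₀ t (ha.trans ht.1)) (zero_le_one.trans (ha.trans ht.1))

theorem logIntegral_nonneg (hA₀ : ∀ t, 1 ≤ t → 0 ≤ A t) (hA : MonotoneOn A (Ici 1))
    (ha : 1 ≤ a) : 0 ≤ logIntegral A a := by
  have h1 : logIntegral A 1 = 0 := intervalIntegral.integral_same
  exact h1 ▸ monotoneOn_logIntegral hA₀ hA self_mem_Ici ha ha

theorem logIntegral_add_le_of_le_mul {r h K : ℝ} (hA₀ : ∀ t, 1 ≤ t → 0 ≤ A t)
    (hA : MonotoneOn A (Ici 1)) (hr : 1 ≤ r) (hh : 0 ≤ h) (hhr : 3 * h ≤ r)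
    (hK : logIntegral A (2 * r) ≤ K * logIntegral A r) :
    logIntegral A (r + h) ≤ logIntegral A r + 3 * h * K * logIntegral A r / r := by
  set T := logIntegral A
  have hr₀ : 0 < r := zero_lt_one.trans_le hr
  have hrh : 1 ≤ r + h := hr.trans (le_add_of_nonneg_right hh)
  have hmono : ∀ {a b}, 1 ≤ a → MonotoneOn A (Icc a b) := fun ha =>
    hA.mono fun t ht => ha.trans ht.1
  have hratio : 1 / 3 ≤ log (2 * r / (r + h)) := by
    refine le_trans ?_ (one_sub_inv_le_log_of_pos (by positivity))
    rw [inv_div, le_sub_comm, div_le_iff₀ (by positivity)]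
    linarith
  have hA_le : A (r + h) ≤ 3 * (K * T r) := calc
    A (r + h) ≤ 3 * (A (r + h) * log (2 * r / (r + h))) := by nlinarith [hA₀ _ hrh]
    _ ≤ 3 * (T (2 * r) - T (r + h)) := by
      rw [logIntegral_sub hA hrh (by linarith)]
      gcongr
      exact mul_log_div_le_integral_div_self (hmono hrh) (by positivity) (by linarith)
    _ ≤ 3 * (K * T r) := by linarith [logIntegral_nonneg hA₀ hA hrh]
  have hstep : T (r + h) - T r ≤ A (r + h) * (h / r) := calc
    T (r + h) - T r ≤ A (r + h) * log ((r + h) / r) := by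
      rw [logIntegral_sub hA hr (by linarith)]
      exact integral_div_self_le_mul_log_div (hmono hr) hr₀ (by linarith)
    _ ≤ A (r + h) * (h / r) := by
      gcongr
      · exact hA₀ _ hrh
      · rw [add_div, div_self hr₀.ne']
        linarith [log_le_sub_one_of_pos (show 0 < 1 + h / r by positivity)]
  calc T (r + h) ≤ T r + A (r + h) * (h / r) := by linarith
    _ ≤ T r + 3 * (K * T r) * (h / r) := by gcongr
    _ = T r + 3 * h * K * T r / r := by ring

end LogIntegral

section Doubling

variable {L : ℝ → ℝ} {R r : ℝ}

theorem intervalIntegrable_comp_two_mul_div_self (hL : MonotoneOn L (Ici R)) (hR : 0 < R)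
    (hRr : R ≤ r) : IntervalIntegrable (fun t => L (2 * t) / t) volume R r := by
  refine intervalIntegrable_div_self (fun x hx y hy hxy => hL ?_ ?_ ?_) hR hRr
  all_goals simp only [mem_Ici, mem_Icc] at *; linarith

/-- The substitution `t ↦ 2t` turns the integral into `∫_r^{2r} L t / t - ∫_R^{2R} L t / t`. -/
theorem integral_sub_comp_two_mul_div_self_le (hL : MonotoneOn L (Ici R))
    (hL₀ : ∀ t, R ≤ t → 0 ≤ L t) (hR : 0 < R) (hRr : R ≤ r) :
    ∫ t in R..r, (L (2 * t) - L t) / t ≤ L (2 * r) * log 2 := by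
  have hint : ∀ {a b}, R ≤ a → a ≤ b → IntervalIntegrable (fun t => L t / t) volume a b :=
    fun ha hab => intervalIntegrable_div_self (hL.mono fun t ht => ha.trans ht.1)
      (hR.trans_le ha) hab
  have hr : 0 < r := hR.trans_le hRr
  have hcomp : ∫ t in R..r, L (2 * t) / t = ∫ t in (2 * R)..(2 * r), L t / t := by
    have key := intervalIntegral.smul_integral_comp_mul_left (a := R) (b := r)
      (fun t => L t / t) 2
    simp only [smul_eq_mul, ← intervalIntegral.integral_const_mul] at key
    rw [← key]
    refine intervalIntegral.integral_congr fun t _ => ?_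
    rw [mul_div_assoc', mul_div_mul_left _ _ two_ne_zero]
  have h2r : ∫ t in r..(2 * r), L t / t ≤ L (2 * r) * log 2 := by
    have := integral_div_self_le_mul_log_div (hL.mono fun t ht => hRr.trans ht.1) hr
      (by linarith : r ≤ 2 * r)
    rwa [mul_div_cancel_right₀ _ hr.ne'] at this
  have h2R : 0 ≤ ∫ t in R..(2 * R), L t / t :=
    intervalIntegral.integral_nonneg (by linarith) fun t ht =>
      div_nonneg (hL₀ t ht.1) (hR.trans_le ht.1).le
  have hsplit₁ := intervalIntegral.integral_add_adjacent_intervals (hint le_rfl (by linarith))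
    (hint (by linarith) (by linarith : 2 * R ≤ 2 * r))
  have hsplit₂ := intervalIntegral.integral_add_adjacent_intervals (hint le_rfl hRr)
    (hint hRr (by linarith : r ≤ 2 * r))
  simp only [sub_div]
  rw [intervalIntegral.integral_sub (intervalIntegrable_comp_two_mul_div_self hL hR hRr)
    (hint le_rfl hRr), hcomp]
  linarith

theorem mul_setIntegral_inv_le {S : Set ℝ} {c : ℝ} (hL : MonotoneOn L (Ici R))
    (hL₀ : ∀ t, R ≤ t → 0 ≤ L t) (hR : 0 < R) (hRr : R ≤ r) (hS : MeasurableSet S)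
    (hSR : S ⊆ Icc R r) (hc : ∀ t ∈ S, c ≤ L (2 * t) - L t) :
    c * ∫ t in S, t⁻¹ ≤ L (2 * r) * log 2 := by
  have hpos : ∀ t ∈ Icc R r, 0 < t := fun t ht => hR.trans_le ht.1
  have hg : IntegrableOn (fun t => (L (2 * t) - L t) / t) (Icc R r) := by
    have := (intervalIntegrable_comp_two_mul_div_self hL hR hRr).sub
      (intervalIntegrable_div_self (hL.mono fun t ht => ht.1) hR hRr)
    simp only [← sub_div] at this
    exact (intervalIntegrable_iff_integrableOn_Icc_of_le hRr).1 this
  have hinv : IntegrableOn (fun t => c * t⁻¹) (Icc R r) :=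
    (continuousOn_const.mul (continuousOn_inv₀.mono fun t ht => (hpos t ht).ne')).integrableOn_Icc
  calc c * ∫ t in S, t⁻¹ = ∫ t in S, c * t⁻¹ := (integral_const_mul c _).symm
    _ ≤ ∫ t in S, (L (2 * t) - L t) / t :=
      setIntegral_mono_on (hinv.mono_set hSR) (hg.mono_set hSR) hS fun t ht =>
        mul_le_mul_of_nonneg_right (hc t ht) (inv_nonneg.2 (hpos t (hSR ht)).le)
    _ ≤ ∫ t in Icc R r, (L (2 * t) - L t) / t := by
      refine setIntegral_mono_set hg ?_ hSR.eventuallyLE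
      refine (ae_restrict_iff' measurableSet_Icc).2 (.of_forall fun t ht => ?_)
      have ht₀ := hpos t ht
      exact div_nonneg (sub_nonneg.2 (hL (mem_Ici.2 ht.1) (mem_Ici.2 (by linarith [ht.1]))
        (by linarith))) ht₀.le
    _ = ∫ t in R..r, (L (2 * t) - L t) / t := by
      rw [intervalIntegral.integral_of_le hRr, integral_Icc_eq_integral_Ioc]
    _ ≤ L (2 * r) * log 2 := integral_sub_comp_two_mul_div_self_le hL hL₀ hR hRr

end Doubling

theorem tendsto_log_mul_div_log {a : ℝ} (ha : a ≠ 0) :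
    Tendsto (fun r => log (a * r) / log r) atTop (𝓝 1) := by
  have hlim : Tendsto (fun r => log a * (log r)⁻¹ + 1) atTop (𝓝 1) := by
    simpa using (tendsto_log_atTop.inv_tendsto_atTop.const_mul (log a)).add_const 1
  refine hlim.congr' ?_
  filter_upwards [eventually_gt_atTop 1] with r hr
  have hlog : log r ≠ 0 := (log_pos hr).ne'
  rw [log_mul ha (by linarith), add_div, div_self hlog, div_eq_mul_inv]

theorem limsup_div_log_le_of_le_comp_two_mul {f g : ℝ → ℝ} {c : ℝ} (hc : 0 ≤ c)
    (hf₀ : ∀ᶠ r in atTop, 0 ≤ f r) (hfg : ∀ᶠ r in atTop, f r ≤ c * g (2 * r))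
    (hg : IsBoundedUnder (· ≤ ·) atTop fun r => g r / log r) :
    limsup (fun r => f r / log r) atTop ≤ c * limsup (fun r => g r / log r) atTop := by
  set ρ := limsup (fun r => g r / log r) atTop
  have hcob : IsCoboundedUnder (· ≤ ·) atTop fun r => f r / log r := by
    refine (isBoundedUnder_of_eventually_ge (a := 0) ?_).isCoboundedUnder_le
    filter_upwards [hf₀, eventually_ge_atTop 1] with r hr hr₁
    exact div_nonneg hr (log_nonneg hr₁)
  have hε : ∀ ε > 0, limsup (fun r => f r / log r) atTop ≤ c * (ρ + ε) := by
    intro ε hε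
    have hlim : Tendsto (fun r => c * (ρ + ε) * (log (2 * r) / log r)) atTop
        (𝓝 (c * (ρ + ε))) := by
      simpa using (tendsto_log_mul_div_log two_ne_zero).const_mul (c * (ρ + ε))
    have hgε : ∀ᶠ r in atTop, g (2 * r) / log (2 * r) < ρ + ε :=
      (tendsto_id.const_mul_atTop two_pos).eventually
        (eventually_lt_of_limsup_lt (lt_add_of_pos_right ρ hε) hg)
    rw [← hlim.limsup_eq]
    refine limsup_le_limsup ?_ hcob hlim.isBoundedUnder_le
    filter_upwards [hfg, hgε, eventually_gt_atTop 1] with r hfr hgr hr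
    have hlog : 0 < log r := log_pos hr
    have hlog₂ : 0 < log (2 * r) := log_pos (by linarith)
    rw [div_lt_iff₀ hlog₂] at hgr
    rw [div_le_iff₀ hlog, mul_assoc, div_mul_cancel₀ _ hlog.ne', mul_assoc]
    exact hfr.trans (mul_le_mul_of_nonneg_left hgr.le hc)
  have hlim₀ : Tendsto (fun ε => c * (ρ + ε)) (𝓝[>] 0) (𝓝 (c * ρ)) := by
    refine tendsto_nhdsWithin_of_tendsto_nhds ?_
    simpa using ((continuous_const.add continuous_id).const_mul c).tendsto (0 : ℝ)
  exact ge_of_tendsto hlim₀ (eventually_nhdsWithin_of_forall hε)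

noncomputable def upperLogDensity (E : Set ℝ) : ℝ :=
  limsup (fun r => (∫ t in E ∩ Icc 1 r, t⁻¹) / log r) atTop

def doublingSet (T : ℝ → ℝ) (K R : ℝ) : Set ℝ := {t | R ≤ t ∧ K * T t < T (2 * t)}

section DoublingSet

variable {T : ℝ → ℝ} {K R : ℝ}

theorem measurableSet_doublingSet (hT : MonotoneOn T (Ici R)) (hR : 0 ≤ R) :
    MeasurableSet (doublingSet T K R) := by
  have hT' : Monotone fun t => T (max t R) := fun x y hxy =>
    hT (le_max_right x R) (le_max_right y R) (max_le_max_right R hxy)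
  have hE : doublingSet T K R = Ici R ∩ {t | K * T (max t R) < T (max (2 * t) R)} := by
    ext t
    refine and_congr_right fun ht => ?_
    rw [mem_ofPred_eq, max_eq_left ht, max_eq_left (by linarith)]
  rw [hE]
  exact measurableSet_Ici.inter <| measurableSet_lt (hT'.measurable.const_mul K)
    (hT'.measurable.comp (measurable_const_mul 2))

theorem log_mul_setIntegral_doublingSet_le {r : ℝ} (hT : MonotoneOn T (Ici R))
    (hT₁ : ∀ t, R ≤ t → 1 ≤ T t) (hR : 0 < R) (hK : 0 < K) (hRr : R ≤ r) :
    log K * ∫ t in doublingSet T K R ∩ Icc 1 r, t⁻¹ ≤ log (T (2 * r)) * log 2 := by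
  refine mul_setIntegral_inv_le (L := fun t => log (T t)) ?_ (fun t ht => log_nonneg (hT₁ t ht))
    hR hRr ((measurableSet_doublingSet hT hR.le).inter measurableSet_Icc)
    (fun t ht => ⟨ht.1.1, ht.2.2⟩) fun t ht => ?_
  · exact fun x hx y hy hxy => log_le_log (zero_lt_one.trans_le (hT₁ x hx)) (hT hx hy hxy)
  · have hTt : 0 < T t := zero_lt_one.trans_le (hT₁ t ht.1.1)
    rw [le_sub_iff_add_le, ← log_mul hK.ne' hTt.ne']
    exact log_le_log (by positivity) ht.1.2.le

theorem upperLogDensity_doublingSet_le (hT : MonotoneOn T (Ici R))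
    (hT₁ : ∀ t, R ≤ t → 1 ≤ T t) (hR : 0 < R) (hK : 1 < K)
    (hbdd : IsBoundedUnder (· ≤ ·) atTop fun r => log (T r) / log r) :
    upperLogDensity (doublingSet T K R)
      ≤ limsup (fun r => log (T r) / log r) atTop * log 2 / log K := by
  have hlogK : 0 < log K := log_pos hK
  have hS : ∀ r, MeasurableSet (doublingSet T K R ∩ Icc 1 r) := fun r =>
    (measurableSet_doublingSet hT hR.le).inter measurableSet_Icc
  rw [mul_div_assoc, mul_comm]
  refine limsup_div_log_le_of_le_comp_two_mul (by positivity) ?_ ?_ hbdd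
  · exact .of_forall fun r => setIntegral_nonneg (hS r) fun t ht =>
      inv_nonneg.2 (zero_le_one.trans ht.2.1)
  · filter_upwards [eventually_ge_atTop R] with r hr
    rw [div_mul_eq_mul_div, le_div_iff₀ hlogK]
    linarith [log_mul_setIntegral_doublingSet_le hT hT₁ hR (zero_lt_one.trans hK) hr]

end DoublingSet

theorem growth_lemma_finite_order_fixed_shift
    (A : ℝ → ℝ) (hApos : ∀ t : ℝ, 1 ≤ t → 0 < A t) (hAmono : MonotoneOn A (Set.Ici 1))
    (T : ℝ → ℝ) (hT : ∀ r : ℝ, T r = ∫ t in (1:ℝ)..r, A t / t)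
    (htop : Filter.Tendsto T Filter.atTop Filter.atTop)
    (ρ : ℝ)
    (hbdd : Filter.IsBoundedUnder (· ≤ ·) Filter.atTop (fun r => Real.log (T r) / Real.log r))
    (hρ : Filter.limsup (fun r => Real.log (T r) / Real.log r) Filter.atTop = ρ)
    (h K : ℝ) (hh : 0 < h) (hK : 1 < K) :
    ∃ E : Set ℝ, E ⊆ Set.Ici 1 ∧
      Filter.limsup (fun r => (∫ t in E ∩ Set.Icc 1 r, t⁻¹) / Real.log r) Filter.atTop
        ≤ ρ * Real.log 2 / Real.log K ∧
      ∃ R₀ : ℝ, ∀ r : ℝ, R₀ ≤ r → r ∉ E → T (r + h) ≤ T r + 4 * h * K * T r / r := by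
  obtain rfl : T = logIntegral A := funext hT
  have hA₀ : ∀ t, 1 ≤ t → 0 ≤ A t := fun t ht => (hApos t ht).le
  obtain ⟨M, hM⟩ := eventually_atTop.1 (htop.eventually_ge_atTop 1)
  set R := max (max 1 (3 * h)) M
  have hR₁ : 1 ≤ R := (le_max_left _ _).trans (le_max_left _ _)
  have hRh : 3 * h ≤ R := (le_max_right _ _).trans (le_max_left _ _)
  refine ⟨doublingSet (logIntegral A) K R, fun t ht => hR₁.trans ht.1, ?_, R, fun r hr hrE => ?_⟩
  · exact hρ ▸ upperLogDensity_doublingSet_le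
      ((monotoneOn_logIntegral hA₀ hAmono).mono (Ici_subset_Ici.2 hR₁))
      (fun t ht => hM t ((le_max_right _ _).trans ht)) (zero_lt_one.trans_le hR₁) hK hbdd
  · have hr₁ : 1 ≤ r := hR₁.trans hr
    have hdouble : logIntegral A (2 * r) ≤ K * logIntegral A r := not_lt.1 fun h' => hrE ⟨hr, h'⟩
    have h34 : 3 * h * K * logIntegral A r / r ≤ 4 * h * K * logIntegral A r / r := by
      have := logIntegral_nonneg hA₀ hAmono hr₁
      have := zero_lt_one.trans hK
      gcongr
      norm_num
    linarith [logIntegral_add_le_of_le_mul hA₀ hAmono hr₁ hh.le (hRh.trans hr) hdouble]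
end

section
/- Let T : [1,∞) → ℝ be non-decreasing with T(r) > e for all r ≥ 1 and T(r) → ∞ as r → ∞, and let ε > 0. Then there exists a set E_ε ⊆ [1,∞) of finite logarithmic measure such that T( r·exp( 1/( log T(r) · (log log T(r))^{1+ε} ) ) ) ≤ e·T(r) for all r ∉ E_ε; in particular, T(r + φ_ε(r)) ≤ e·T(r) for all r ∉ E_ε, where φ_ε(r) = r/((log log T(r))^{1+ε} · log T(r)). -/
open MeasureTheory Filter Metric

/-!
With `u = log T` and `δ(r) = 1/(u (log u)^{1+ε})`, the exceptional set consists of those `r`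
for which `u` rises by more than `1` on `[r, r e^{δ(r)}]`. Exceptional points with the same
integer part `⌊u(r)⌋ = n` cannot lie beyond one another's shift `r e^{δ(r)}` (past it `u` has
already climbed a full level), so they fit into one window `[a, a e^{g(n)}]` of logarithmic
measure `g(n)`, where `g(n) ≍ 1/(n (log n)^{1+ε})` bounds `δ` on that level. These `g(n)` are
summable by Cauchy condensation. The additive form follows from `1 + δ ≤ e^δ`.
-/

open Set Real

theorem inv_mul_log_rpow_nonneg {x : ℝ} (hx : 1 ≤ x) (p : ℝ) : 0 ≤ (x * log x ^ p)⁻¹ :=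
  inv_nonneg.2 (mul_nonneg (zero_le_one.trans hx) (rpow_nonneg (log_nonneg hx) p))

theorem antitoneOn_inv_mul_log_rpow {p : ℝ} (hp : 0 ≤ p) :
    AntitoneOn (fun x : ℝ => (x * log x ^ p)⁻¹) (Ioi 1) := by
  intro x hx y hy hxy
  have hlogx : 0 < log x := log_pos hx
  exact inv_anti₀ (mul_pos (zero_lt_one.trans hx) (rpow_pos_of_pos hlogx p))
    (mul_le_mul hxy (rpow_le_rpow hlogx.le (log_le_log (zero_lt_one.trans hx) hxy) hp)
      (rpow_pos_of_pos hlogx p).le (zero_lt_one.trans hy).le)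

theorem summable_inv_mul_log_rpow {p : ℝ} (hp : 1 < p) :
    Summable fun n : ℕ => ((n : ℝ) * log n ^ p)⁻¹ := by
  have hnonneg : ∀ n : ℕ, 0 ≤ ((n : ℝ) * log n ^ p)⁻¹ := fun n =>
    inv_nonneg.2 (mul_nonneg n.cast_nonneg (rpow_nonneg (log_natCast_nonneg n) p))
  have hanti : ∀ᶠ k : ℕ in atTop,
      ((↑(k + 1) : ℝ) * log ↑(k + 1) ^ p)⁻¹ ≤ ((k : ℝ) * log k ^ p)⁻¹ := by
    filter_upwards [eventually_ge_atTop 2] with k hk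
    have hk1 : (1 : ℝ) < k := by exact_mod_cast hk
    exact antitoneOn_inv_mul_log_rpow (by linarith) hk1 (mem_Ioi.2 (by push_cast; linarith))
      (by push_cast; linarith)
  rw [← summable_condensed_iff_of_eventually_nonneg (Eventually.of_forall hnonneg) hanti]
  have hcondensed : ∀ k : ℕ, (2 : ℝ) ^ k * ((↑(2 ^ k : ℕ) : ℝ) * log ↑(2 ^ k : ℕ) ^ p)⁻¹ =
      log 2 ^ (-p) * (k : ℝ) ^ (-p) := by
    intro k
    rw [← mul_rpow (log_pos one_lt_two).le k.cast_nonneg, rpow_neg (by positivity)]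
    push_cast
    rw [log_pow, mul_inv, ← mul_assoc, mul_inv_cancel₀ (by positivity), one_mul, mul_comm (k : ℝ)]
  simp_rw [hcondensed]
  exact (summable_nat_rpow.2 (by linarith)).mul_left _

theorem summable_inv_mul_log_rpow_max {p : ℝ} (hp : 1 < p) (c : ℝ) :
    Summable fun n : ℕ => (max (n : ℝ) c * log (max (n : ℝ) c) ^ p)⁻¹ := by
  refine (summable_inv_mul_log_rpow hp).congr_atTop ?_
  filter_upwards [eventually_ge_atTop ⌈c⌉₊] with n hn
  rw [max_eq_left (Nat.ceil_le.1 hn)]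

theorem lintegral_Icc_inv {a b : ℝ} (ha : 0 < a) (hab : a ≤ b) :
    ∫⁻ t in Icc a b, ENNReal.ofReal t⁻¹ = ENNReal.ofReal (log (b / a)) := by
  have hint : IntegrableOn (fun t : ℝ => t⁻¹) (Icc a b) :=
    (continuousOn_inv₀.mono fun t ht => (ha.trans_le ht.1).ne').integrableOn_Icc
  rw [← ofReal_integral_eq_lintegral_ofReal hint, integral_Icc_eq_integral_Ioc,
    ← intervalIntegral.integral_of_le hab, integral_inv_of_pos ha (ha.trans_le hab)]
  filter_upwards [ae_restrict_mem measurableSet_Icc] with t ht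
  exact inv_nonneg.2 (ha.le.trans ht.1)

theorem setLIntegral_inv_le_of_subset_Icc_mul_exp {s : Set ℝ} {a c : ℝ} (ha : 0 < a)
    (hc : 0 ≤ c) (hs : s ⊆ Icc a (a * exp c)) :
    ∫⁻ t in s, ENNReal.ofReal t⁻¹ ≤ ENNReal.ofReal c :=
  calc ∫⁻ t in s, ENNReal.ofReal t⁻¹ ≤ ∫⁻ t in Icc a (a * exp c), ENNReal.ofReal t⁻¹ :=
        lintegral_mono_set hs
    _ = ENNReal.ofReal c := by
        rw [lintegral_Icc_inv ha (le_mul_of_one_le_right ha.le (one_le_exp hc)),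
          mul_div_cancel_left₀ _ ha.ne', log_exp]

theorem FiniteLogMeasure.of_subset_iUnion {E : Set ℝ} {S : ℕ → Set ℝ} {g : ℕ → ℝ}
    (hg : Summable g) (hg0 : ∀ n, 0 ≤ g n) (hS : ∀ n, ∃ a > 0, S n ⊆ Icc a (a * exp (g n)))
    (hE : E ⊆ ⋃ n, S n) : FiniteLogMeasure E :=
  calc ∫⁻ t in E, ENNReal.ofReal t⁻¹ ≤ ∫⁻ t in ⋃ n, S n, ENNReal.ofReal t⁻¹ :=
        lintegral_mono_set hE
    _ ≤ ∑' n, ∫⁻ t in S n, ENNReal.ofReal t⁻¹ := lintegral_iUnion_le _ _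
    _ ≤ ∑' n, ENNReal.ofReal (g n) := ENNReal.tsum_le_tsum fun n => by
        obtain ⟨a, ha, hsub⟩ := hS n
        exact setLIntegral_inv_le_of_subset_Icc_mul_exp ha (hg0 n) hsub
    _ = ENNReal.ofReal (∑' n, g n) := (ENNReal.ofReal_tsum_of_nonneg hg0 hg).symm
    _ < ⊤ := ENNReal.ofReal_lt_top

theorem exists_subset_Icc_mul_exp {s : Set ℝ} {c : ℝ} (hs : s ⊆ Ici 1)
    (h : ∀ r ∈ s, ∀ x ∈ s, x ≤ r * exp c) : ∃ a > 0, s ⊆ Icc a (a * exp c) := by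
  rcases s.eq_empty_or_nonempty with rfl | hne
  · exact ⟨1, one_pos, empty_subset _⟩
  refine ⟨sInf s, zero_lt_one.trans_le (le_csInf hne hs), fun x hx => ⟨csInf_le ⟨1, hs⟩ hx, ?_⟩⟩
  have hlower : x / exp c ≤ sInf s :=
    le_csInf hne fun r hr => (div_le_iff₀ (exp_pos c)).2 (h r hr x hx)
  exact (div_le_iff₀ (exp_pos c)).1 hlower

theorem finiteLogMeasure_setOf_add_one_lt {u δ : ℝ → ℝ} {g : ℕ → ℝ}
    (hu : MonotoneOn u (Ici 1)) (hu0 : ∀ r, 1 ≤ r → 0 ≤ u r) (hδ0 : ∀ r, 1 ≤ r → 0 ≤ δ r)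
    (hδg : ∀ r, 1 ≤ r → δ r ≤ g ⌊u r⌋₊) (hg : Summable g) (hg0 : ∀ n, 0 ≤ g n) :
    FiniteLogMeasure {r | 1 ≤ r ∧ u r + 1 < u (r * exp (δ r))} := by
  set E := {r | 1 ≤ r ∧ u r + 1 < u (r * exp (δ r))}
  refine FiniteLogMeasure.of_subset_iUnion (S := fun n => {r ∈ E | ⌊u r⌋₊ = n}) hg hg0
    (fun n => exists_subset_Icc_mul_exp (fun r hr => hr.1.1) ?_)
    (fun r hr => mem_iUnion.2 ⟨_, hr, rfl⟩)
  rintro r ⟨⟨hr1, hjump⟩, rfl⟩ x ⟨-, hxr⟩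
  have hshift : 1 ≤ r * exp (δ r) := hr1.trans (le_mul_of_one_le_right (by linarith)
    (one_le_exp (hδ0 r hr1)))
  have hxlt : x < r * exp (δ r) := by
    by_contra! hle
    have hux := hu hshift (hshift.trans hle) hle
    have hlevel_r := Nat.floor_le (hu0 r hr1)
    have hlevel_x := Nat.lt_floor_add_one (u x)
    rw [hxr] at hlevel_x
    linarith
  exact hxlt.le.trans (mul_le_mul_of_nonneg_left (exp_le_exp.2 (hδg r hr1)) (by linarith))

theorem exists_finiteLogMeasure_forall_le_exp_one_mul {T δ : ℝ → ℝ} {g : ℕ → ℝ}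
    (hT : MonotoneOn T (Ici 1)) (hT1 : ∀ r, 1 ≤ r → 1 ≤ T r) (hδ0 : ∀ r, 1 ≤ r → 0 ≤ δ r)
    (hδg : ∀ r, 1 ≤ r → δ r ≤ g ⌊log (T r)⌋₊) (hg : Summable g) (hg0 : ∀ n, 0 ≤ g n) :
    ∃ E ⊆ Ici 1, FiniteLogMeasure E ∧
      ∀ r, 1 ≤ r → r ∉ E → T (r * exp (δ r)) ≤ exp 1 * T r := by
  have hT0 (r : ℝ) (hr : 1 ≤ r) : 0 < T r := zero_lt_one.trans_le (hT1 r hr)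
  have hu : MonotoneOn (fun r => log (T r)) (Ici 1) := fun r hr s hs hrs =>
    log_le_log (hT0 r hr) (hT hr hs hrs)
  refine ⟨_, fun r hr => hr.1, finiteLogMeasure_setOf_add_one_lt hu
    (fun r hr => log_nonneg (hT1 r hr)) hδ0 hδg hg hg0, fun r hr hrE => ?_⟩
  have hshift : 1 ≤ r * exp (δ r) :=
    hr.trans (le_mul_of_one_le_right (by linarith) (one_le_exp (hδ0 r hr)))
  have hlog : log (T (r * exp (δ r))) ≤ log (T r) + 1 := not_lt.1 fun h => hrE ⟨hr, h⟩
  rwa [log_le_iff_le_exp (hT0 _ hshift), exp_add, exp_log (hT0 r hr), mul_comm (T r)] at hlog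

theorem MonotoneOn.map_mul_one_add_le_map_mul_exp {T : ℝ → ℝ} (hT : MonotoneOn T (Ici 1))
    {r δ : ℝ} (hr : 1 ≤ r) (hδ : 0 ≤ δ) : T (r * (1 + δ)) ≤ T (r * exp δ) := by
  have hle : r * (1 + δ) ≤ r * exp δ :=
    mul_le_mul_of_nonneg_left (by linarith [add_one_le_exp δ]) (by linarith)
  have h1 : 1 ≤ r * (1 + δ) := hr.trans (le_mul_of_one_le_right (by linarith) (by linarith))
  exact hT h1 (h1.trans hle) hle

theorem growth_lemma_exponential_shift_general
    (T : ℝ → ℝ) (hmono : MonotoneOn T (Set.Ici 1)) (hTe : ∀ r : ℝ, 1 ≤ r → Real.exp 1 < T r)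
    (ε : ℝ) (hε : 0 < ε) :
    ∃ E : Set ℝ, E ⊆ Set.Ici 1 ∧ FiniteLogMeasure E ∧
      (∀ r : ℝ, 1 ≤ r → r ∉ E →
        T (r * Real.exp (1 / (Real.log (T r) * (Real.log (Real.log (T r))) ^ (1 + ε)))) ≤
          Real.exp 1 * T r) ∧
      (∀ r : ℝ, 1 ≤ r → r ∉ E →
        T (r + r / ((Real.log (Real.log (T r))) ^ (1 + ε) * Real.log (T r))) ≤
          Real.exp 1 * T r) := by
  set δ : ℝ → ℝ := fun r => 1 / (log (T r) * log (log (T r)) ^ (1 + ε)) with hδ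
  have hlogT (r : ℝ) (hr : 1 ≤ r) : 1 < log (T r) :=
    (lt_log_iff_exp_lt ((exp_pos 1).trans (hTe r hr))).2 (hTe r hr)
  have hδ0 (r : ℝ) (hr : 1 ≤ r) : 0 ≤ δ r := by
    simpa only [hδ, one_div] using inv_mul_log_rpow_nonneg (hlogT r hr).le (1 + ε)
  set g : ℕ → ℝ := fun n => (max (n : ℝ) (log (T 1)) * log (max (n : ℝ) (log (T 1))) ^ (1 + ε))⁻¹
    with hg
  have hg1 (n : ℕ) : 1 < max (n : ℝ) (log (T 1)) := lt_max_of_lt_right (hlogT 1 le_rfl)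
  -- `δ = φ ∘ log T` for the antitone `φ x = (x (log x)^(1+ε))⁻¹`, and `log T ≥ log T 1 > 1`.
  have hδg (r : ℝ) (hr : 1 ≤ r) : δ r ≤ g ⌊log (T r)⌋₊ := by
    simp only [hδ, hg, one_div]
    exact antitoneOn_inv_mul_log_rpow (by linarith) (hg1 _) (hlogT r hr)
      (max_le (Nat.floor_le (by linarith [hlogT r hr]))
        (log_le_log (by linarith [hTe 1 le_rfl, exp_pos 1]) (hmono (mem_Ici.2 le_rfl) hr hr)))
  have hg0 (n : ℕ) : 0 ≤ g n := inv_mul_log_rpow_nonneg (hg1 n).le _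
  obtain ⟨E, hE1, hEfin, hE⟩ := exists_finiteLogMeasure_forall_le_exp_one_mul hmono
    (fun r hr => (one_le_exp zero_le_one).trans (hTe r hr).le) hδ0 hδg
    (summable_inv_mul_log_rpow_max (by linarith) _) hg0
  refine ⟨E, hE1, hEfin, hE, fun r hr hrE => ?_⟩
  have heq : r + r / (log (log (T r)) ^ (1 + ε) * log (T r)) = r * (1 + δ r) := by
    simp only [hδ]
    ring
  rw [heq]
  exact (hmono.map_mul_one_add_le_map_mul_exp hr (hδ0 r hr)).trans (hE r hr hrE)

theorem growth_lemma_exponential_shift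
    (T : ℝ → ℝ) (hmono : MonotoneOn T (Set.Ici 1)) (hTe : ∀ r : ℝ, 1 ≤ r → Real.exp 1 < T r)
    (htop : Filter.Tendsto T Filter.atTop Filter.atTop) (ε : ℝ) (hε : 0 < ε) :
    ∃ E : Set ℝ, E ⊆ Set.Ici 1 ∧ FiniteLogMeasure E ∧
      (∀ r : ℝ, 1 ≤ r → r ∉ E →
        T (r * Real.exp (1 / (Real.log (T r) * (Real.log (Real.log (T r))) ^ (1 + ε)))) ≤
          Real.exp 1 * T r) ∧
      (∀ r : ℝ, 1 ≤ r → r ∉ E →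
        T (r + r / ((Real.log (Real.log (T r))) ^ (1 + ε) * Real.log (T r))) ≤
          Real.exp 1 * T r) :=
  growth_lemma_exponential_shift_general T hmono hTe ε hε
end

section
/- Let μ be a Borel measure on ℂ that is finite on compact sets, such that N(μ,0,r) has finite order λ = limsup_{r→∞} (log⁺ N(μ,0,r))/(log r) < ∞. Then for every c ∈ ℂ and every ε > 0 with λ − 1 + ε ≠ 0 there exists a constant C > 0 such that |N(μ,c,r) − N(μ,0,r)| ≤ C·(1 + r^{λ−1+ε}) for all r ≥ 1; in particular also N(μ,0,r+|c|) ≤ N(μ,0,r) + C·(1 + r^{λ−1+ε}) for all r ≥ 1. -/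
open MeasureTheory Filter Metric

/-- `n(mu, c, t) = mu(closedBall c t)` for a Borel measure on the plane. -/
noncomputable def ballCnt (mu : MeasureTheory.Measure ℂ) (c : ℂ) (t : ℝ) : ℝ :=
  (mu (closedBall c t)).toReal

/-- `N(mu, c, r) = ∫₁^r n(mu,c,t)/t dt`. -/
noncomputable def intCnt (mu : MeasureTheory.Measure ℂ) (c : ℂ) (r : ℝ) : ℝ :=
  ∫ t in (1:ℝ)..r, ballCnt mu c t / t

/-! Write `n_c(t) = μ(closedBall c t)` and `a = ‖c‖`. The inclusions of closed balls give
`n_c(t) ≤ n_0(t + a)` and `n_0(t) ≤ n_c(t + a)`, so both estimates reduce to comparing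
`∫₁^r n(t + a)/t dt` with `∫₁^r n(t)/t dt` for a monotone `n ≥ 0`.

Finite order gives `N(μ,0,r) ≤ C r^e` with `e = λ + ε`, hence
`n_0(r) log 2 ≤ N(μ,0,2r) = O(r^e)`, and the same for `n_c`. Now
`n(t + a)/t - n(t + a)/(t + a) ≤ a n(t + a)/t² = O(t^(e-2))`, whose integral over `[1, r]`
is `O(1 + r^(e-1))` because `e ≠ 1`; and `∫₁^r n(t + a)/(t + a) dt` exceeds
`∫₁^r n(t)/t dt` by at most `∫_r^(r+a) n(t)/t dt ≤ a n(r + a)/r = O(r^(e-1))`. -/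

open intervalIntegral

section LogarithmicIntegral

variable {f : ℝ → ℝ} {a C e p q r t : ℝ}

lemma Monotone.intervalIntegrable_div_self (hf : Monotone f) (hp : 0 < p) (hq : 0 < q) :
    IntervalIntegrable (fun t => f t / t) volume p q := by
  simp only [div_eq_mul_inv]
  exact hf.intervalIntegrable.mul_continuousOn
    (continuousOn_inv₀.mono fun t ht => ((lt_min hp hq).trans_le ht.1).ne')

lemma integral_div_self_add_adjacent (hf : Monotone f) (hp : 0 < p) (hq : 0 < q) (hr : 0 < r) :
    (∫ t in p..q, f t / t) + ∫ t in q..r, f t / t = ∫ t in p..r, f t / t :=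
  integral_add_adjacent_intervals (hf.intervalIntegrable_div_self hp hq)
    (hf.intervalIntegrable_div_self hq hr)

lemma integral_div_self_nonneg (hf0 : 0 ≤ f) (hp : 0 < p) (hpq : p ≤ q) :
    0 ≤ ∫ t in p..q, f t / t :=
  integral_nonneg hpq fun t ht => div_nonneg (hf0 t) (hp.trans_le ht.1).le

lemma mul_log_two_le_integral_div_self (hf : Monotone f) (hr : 0 < r) :
    f r * Real.log 2 ≤ ∫ t in r..2 * r, f t / t := by
  have hlog : ∫ t in r..2 * r, f r / t = f r * Real.log 2 := by
    simp only [div_eq_mul_inv, intervalIntegral.integral_const_mul]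
    rw [integral_inv_of_pos hr (by linarith), mul_div_cancel_right₀ _ hr.ne']
  rw [← hlog]
  exact integral_mono_on (by linarith) (monotone_const.intervalIntegrable_div_self hr (by linarith))
    (hf.intervalIntegrable_div_self hr (by linarith))
    fun t ht => div_le_div_of_nonneg_right (hf ht.1) (hr.trans_le ht.1).le

lemma le_mul_rpow_of_integral_div_self_le (hf : Monotone f) (hf0 : 0 ≤ f)
    (hN : ∀ s, 1 ≤ s → ∫ t in (1:ℝ)..s, f t / t ≤ C * s ^ e) :
    ∀ r, 1 ≤ r → f r ≤ C * 2 ^ e / Real.log 2 * r ^ e := by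
  intro r hr
  have hr0 : 0 < r := by linarith
  rw [div_mul_eq_mul_div, le_div_iff₀ (Real.log_pos one_lt_two)]
  calc f r * Real.log 2 ≤ ∫ t in r..2 * r, f t / t := mul_log_two_le_integral_div_self hf hr0
    _ ≤ ∫ t in (1:ℝ)..2 * r, f t / t := by
        rw [← integral_div_self_add_adjacent hf one_pos hr0 (by linarith)]
        linarith [integral_div_self_nonneg hf0 one_pos hr]
    _ ≤ C * (2 * r) ^ e := hN _ (by linarith)
    _ = C * 2 ^ e * r ^ e := by rw [Real.mul_rpow zero_le_two hr0.le, mul_assoc]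

lemma comp_add_le_mul_rpow (hC : 0 ≤ C) (ha : 0 ≤ a) (he : 0 ≤ e)
    (hbound : ∀ s, 1 ≤ s → f s ≤ C * s ^ e) (hr : 1 ≤ r) :
    f (r + a) ≤ C * (1 + a) ^ e * r ^ e :=
  calc f (r + a) ≤ C * (r + a) ^ e := hbound _ (by linarith)
    _ ≤ C * ((1 + a) * r) ^ e := by gcongr; nlinarith
    _ = C * (1 + a) ^ e * r ^ e := by rw [Real.mul_rpow (by linarith) (by linarith), mul_assoc]

lemma integral_div_self_add_le (hf : Monotone f) (hf0 : 0 ≤ f) (hC : 0 ≤ C) (ha : 0 ≤ a)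
    (he : 0 ≤ e) (hbound : ∀ s, 1 ≤ s → f s ≤ C * s ^ e) (hr : 1 ≤ r) :
    ∫ t in r..r + a, f t / t ≤ C * (1 + a) ^ e * a * r ^ (e - 1) := by
  have hr0 : 0 < r := by linarith
  calc ∫ t in r..r + a, f t / t ≤ ∫ t in r..r + a, f (r + a) / r :=
        integral_mono_on (by linarith) (hf.intervalIntegrable_div_self hr0 (by linarith))
          intervalIntegrable_const fun t ht => div_le_div₀ (hf0 _) (hf ht.2) hr0 ht.1
    _ = f (r + a) * a / r := by rw [intervalIntegral.integral_const, smul_eq_mul]; ring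
    _ ≤ C * (1 + a) ^ e * r ^ e * a / r := by
        gcongr; exact comp_add_le_mul_rpow hC ha he hbound hr
    _ = C * (1 + a) ^ e * a * r ^ (e - 1) := by rw [Real.rpow_sub_one hr0.ne']; ring

lemma integral_rpow_sub_one_le (hq : q ≠ 0) (hr : 1 ≤ r) :
    ∫ t in (1:ℝ)..r, t ^ (q - 1) ≤ (1 + r ^ q) / |q| := by
  rw [integral_rpow (Or.inr ⟨fun h => hq (by linarith),
    Set.notMem_uIcc_of_lt one_pos (by linarith)⟩), sub_add_cancel, Real.one_rpow]
  have hrq : 0 ≤ r ^ q := Real.rpow_nonneg (by linarith) q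
  calc (r ^ q - 1) / q ≤ |(r ^ q - 1) / q| := le_abs_self _
    _ = |r ^ q - 1| / |q| := abs_div _ _
    _ ≤ (1 + r ^ q) / |q| := by
        gcongr; rw [abs_sub_le_iff]; constructor <;> linarith

lemma comp_add_div_le_add_mul_rpow (hC : 0 ≤ C) (ha : 0 ≤ a) (he : 0 ≤ e)
    (hbound : ∀ s, 1 ≤ s → f s ≤ C * s ^ e) (ht : 1 ≤ t) :
    f (t + a) / t ≤ f (t + a) / (t + a) + C * (1 + a) ^ e * a * t ^ (e - 1 - 1) := by
  have ht0 : 0 < t := by linarith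
  calc f (t + a) / t = f (t + a) / (t + a) + f (t + a) * a / (t * (t + a)) := by
        field_simp
    _ ≤ f (t + a) / (t + a) + C * (1 + a) ^ e * t ^ e * a / (t * t) := by
        gcongr
        · exact comp_add_le_mul_rpow hC ha he hbound ht
        · linarith
    _ = f (t + a) / (t + a) + C * (1 + a) ^ e * a * t ^ (e - 1 - 1) := by
        rw [Real.rpow_sub_one ht0.ne', Real.rpow_sub_one ht0.ne']; ring

lemma integral_comp_add_div_add_le (hf : Monotone f) (hf0 : 0 ≤ f) (hC : 0 ≤ C) (ha : 0 ≤ a)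
    (he : 0 ≤ e) (hbound : ∀ s, 1 ≤ s → f s ≤ C * s ^ e) (hr : 1 ≤ r) :
    ∫ t in (1:ℝ)..r, f (t + a) / (t + a) ≤
      (∫ t in (1:ℝ)..r, f t / t) + C * (1 + a) ^ e * a * r ^ (e - 1) := by
  have h₁ := integral_div_self_add_adjacent hf one_pos (by linarith : (0:ℝ) < 1 + a)
    (by linarith : (0:ℝ) < r + a)
  have h₂ := integral_div_self_add_adjacent hf one_pos (by linarith : (0:ℝ) < r)
    (by linarith : (0:ℝ) < r + a)
  have h₃ := integral_div_self_nonneg hf0 one_pos (by linarith : (1:ℝ) ≤ 1 + a)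
  have h₄ := integral_div_self_add_le hf hf0 hC ha he hbound hr
  rw [intervalIntegral.integral_comp_add_right (fun t => f t / t)]
  linarith

lemma integral_comp_add_div_self_le (hf : Monotone f) (hf0 : 0 ≤ f) (hC : 0 ≤ C) (ha : 0 ≤ a)
    (he : 0 ≤ e) (he1 : e ≠ 1) (hbound : ∀ s, 1 ≤ s → f s ≤ C * s ^ e) :
    ∃ D, 0 ≤ D ∧ ∀ r, 1 ≤ r →
      ∫ t in (1:ℝ)..r, f (t + a) / t ≤
        (∫ t in (1:ℝ)..r, f t / t) + D * (1 + r ^ (e - 1)) := by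
  set K := C * (1 + a) ^ e * a
  have hK : 0 ≤ K := by positivity
  refine ⟨K + K / |e - 1|, by positivity, fun r hr => ?_⟩
  have hfa : Monotone fun t => f (t + a) := fun x y h => hf (by linarith)
  have hpow := integral_rpow_sub_one_le (sub_ne_zero.2 he1) hr
  have hrpow : 0 ≤ r ^ (e - 1) := Real.rpow_nonneg (by linarith) _
  have hint₁ : IntervalIntegrable (fun t => f (t + a) / (t + a)) volume 1 r := by
    simpa using (hf.intervalIntegrable_div_self (p := 1 + a) (q := r + a) (by linarith)
      (by linarith)).comp_add_right a
  have hint₂ : IntervalIntegrable (fun t => K * t ^ (e - 1 - 1)) volume 1 r :=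
    (intervalIntegrable_rpow (Or.inr (Set.notMem_uIcc_of_lt one_pos (by linarith)))).const_mul K
  have hKr : K * r ^ (e - 1) ≤ K * (1 + r ^ (e - 1)) := by gcongr; linarith
  calc ∫ t in (1:ℝ)..r, f (t + a) / t
      ≤ ∫ t in (1:ℝ)..r, (f (t + a) / (t + a) + K * t ^ (e - 1 - 1)) :=
        integral_mono_on hr (hfa.intervalIntegrable_div_self one_pos (by linarith))
          (hint₁.add hint₂) fun t ht => comp_add_div_le_add_mul_rpow hC ha he hbound ht.1
    _ = (∫ t in (1:ℝ)..r, f (t + a) / (t + a)) + K * ∫ t in (1:ℝ)..r, t ^ (e - 1 - 1) := by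
        rw [intervalIntegral.integral_add hint₁ hint₂, intervalIntegral.integral_const_mul]
    _ ≤ (∫ t in (1:ℝ)..r, f t / t) + K * r ^ (e - 1) + K * ((1 + r ^ (e - 1)) / |e - 1|) := by
        gcongr
        exact integral_comp_add_div_add_le hf hf0 hC ha he hbound hr
    _ ≤ (∫ t in (1:ℝ)..r, f t / t) + (K + K / |e - 1|) * (1 + r ^ (e - 1)) := by
        rw [add_mul, div_mul_eq_mul_div, mul_div_assoc]
        linarith

end LogarithmicIntegral

section Growth

variable {g : ℝ → ℝ} {e : ℝ}

lemma le_rpow_of_logPlus_div_log_lt {x r : ℝ} (hr : 1 < r) (h : logPlus x / Real.log r < e) :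
    x ≤ r ^ e := by
  rcases le_or_gt x 0 with hx | hx
  · exact hx.trans (Real.rpow_nonneg (by linarith) e)
  · rw [div_lt_iff₀ (Real.log_pos hr)] at h
    rw [Real.le_rpow_iff_log_le hx (by linarith)]
    exact (le_max_right _ _).trans h.le

lemma limsup_logPlus_div_log_nonneg
    (hbdd : IsBoundedUnder (· ≤ ·) atTop (fun r => logPlus (g r) / Real.log r)) :
    0 ≤ limsup (fun r => logPlus (g r) / Real.log r) atTop := by
  refine le_limsup_of_frequently_le (Eventually.frequently ?_) hbdd
  filter_upwards [eventually_ge_atTop 1] with r hr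
  exact div_nonneg (le_max_left _ _) (Real.log_nonneg hr)

lemma exists_le_mul_rpow_of_eventually_le (hg : MonotoneOn g (Set.Ici 1)) (he : 0 ≤ e)
    (hev : ∀ᶠ r in atTop, g r ≤ r ^ e) :
    ∃ C, 0 ≤ C ∧ ∀ r, 1 ≤ r → g r ≤ C * r ^ e := by
  obtain ⟨R, hR⟩ := eventually_atTop.1 (hev.and (eventually_ge_atTop 1))
  have hC : 1 ≤ max 1 (g R) := le_max_left _ _
  refine ⟨max 1 (g R), by linarith, fun r hr => ?_⟩
  rcases le_total R r with hRr | hrR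
  · exact (hR r hRr).1.trans (le_mul_of_one_le_left (Real.rpow_nonneg (by linarith) e) hC)
  · calc g r ≤ g R := hg hr (hR R le_rfl).2 hrR
      _ ≤ max 1 (g R) := le_max_right _ _
      _ ≤ max 1 (g R) * r ^ e := le_mul_of_one_le_right (by linarith) (Real.one_le_rpow hr he)

lemma exists_le_mul_rpow_of_limsup_lt (hg : MonotoneOn g (Set.Ici 1)) (he : 0 ≤ e)
    (hbdd : IsBoundedUnder (· ≤ ·) atTop (fun r => logPlus (g r) / Real.log r))
    (hlt : limsup (fun r => logPlus (g r) / Real.log r) atTop < e) :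
    ∃ C, 0 ≤ C ∧ ∀ r, 1 ≤ r → g r ≤ C * r ^ e := by
  refine exists_le_mul_rpow_of_eventually_le hg he ?_
  filter_upwards [eventually_lt_of_limsup_lt hlt hbdd, eventually_gt_atTop 1] with r h hr
  exact le_rpow_of_logPlus_div_log_lt hr h

end Growth

section CountingFunction

lemma ballCnt_nonneg (μ : Measure ℂ) (c : ℂ) : 0 ≤ ballCnt μ c :=
  fun _ => ENNReal.toReal_nonneg

variable (μ : Measure ℂ) [IsFiniteMeasureOnCompacts μ] {C e r : ℝ}

lemma ballCnt_mono (c : ℂ) : Monotone (ballCnt μ c) := fun _ _ hst =>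
  ENNReal.toReal_mono (isCompact_closedBall c _).measure_lt_top.ne
    (measure_mono (closedBall_subset_closedBall hst))

lemma ballCnt_le_ballCnt_add_norm_sub (c c' : ℂ) (t : ℝ) :
    ballCnt μ c t ≤ ballCnt μ c' (t + ‖c - c'‖) :=
  ENNReal.toReal_mono (isCompact_closedBall c' _).measure_lt_top.ne
    (measure_mono (closedBall_subset_closedBall' (by rw [dist_eq_norm])))

lemma ballCnt_le_mul_rpow_of_le {c' : ℂ} (c : ℂ) (hC : 0 ≤ C) (he : 0 ≤ e)
    (hbound : ∀ s, 1 ≤ s → ballCnt μ c' s ≤ C * s ^ e) :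
    ∀ s, 1 ≤ s → ballCnt μ c s ≤ C * (1 + ‖c - c'‖) ^ e * s ^ e := fun s hs =>
  (ballCnt_le_ballCnt_add_norm_sub μ c c' s).trans
    (comp_add_le_mul_rpow hC (norm_nonneg _) he hbound hs)

lemma intCnt_monotoneOn (c : ℂ) : MonotoneOn (intCnt μ c) (Set.Ici 1) := fun p hp q _ hpq => by
  have hp0 : (0:ℝ) < p := lt_of_lt_of_le one_pos hp
  rw [intCnt, intCnt, ← integral_div_self_add_adjacent (ballCnt_mono μ c) one_pos hp0
    (hp0.trans_le hpq)]
  linarith [integral_div_self_nonneg (ballCnt_nonneg μ c) hp0 hpq]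

lemma intCnt_add_le {c : ℂ} {a : ℝ} (hC : 0 ≤ C) (ha : 0 ≤ a) (he : 0 ≤ e)
    (hbound : ∀ s, 1 ≤ s → ballCnt μ c s ≤ C * s ^ e) (hr : 1 ≤ r) :
    intCnt μ c (r + a) ≤ intCnt μ c r + C * (1 + a) ^ e * a * r ^ (e - 1) := by
  rw [intCnt, intCnt, ← integral_div_self_add_adjacent (ballCnt_mono μ c) one_pos
    (by linarith : (0:ℝ) < r) (by linarith : (0:ℝ) < r + a)]
  linarith [integral_div_self_add_le (ballCnt_mono μ c) (ballCnt_nonneg μ c) hC ha he hbound hr]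

lemma intCnt_le_intCnt_add (c c' : ℂ) (hC : 0 ≤ C) (he : 0 ≤ e) (he1 : e ≠ 1)
    (hbound : ∀ s, 1 ≤ s → ballCnt μ c' s ≤ C * s ^ e) :
    ∃ D, 0 ≤ D ∧ ∀ r, 1 ≤ r →
      intCnt μ c r ≤ intCnt μ c' r + D * (1 + r ^ (e - 1)) := by
  obtain ⟨D, hD, h⟩ := integral_comp_add_div_self_le (ballCnt_mono μ c') (ballCnt_nonneg μ c')
    hC (norm_nonneg (c - c')) he he1 hbound
  refine ⟨D, hD, fun r hr => le_trans ?_ (h r hr)⟩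
  exact integral_mono_on hr ((ballCnt_mono μ c).intervalIntegrable_div_self one_pos (by linarith))
    (((ballCnt_mono μ c').comp (monotone_id.add_const _)).intervalIntegrable_div_self one_pos
      (by linarith))
    fun t ht => div_le_div_of_nonneg_right (ballCnt_le_ballCnt_add_norm_sub μ c c' t)
      (by linarith [ht.1])

end CountingFunction

theorem counting_function_finite_order_shift
    (μ : MeasureTheory.Measure ℂ) [MeasureTheory.IsFiniteMeasureOnCompacts μ] (lam : ℝ)
    (hbdd : Filter.IsBoundedUnder (· ≤ ·) Filter.atTop
      (fun r => logPlus (intCnt μ 0 r) / Real.log r))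
    (hlam : Filter.limsup (fun r => logPlus (intCnt μ 0 r) / Real.log r) Filter.atTop = lam) :
    ∀ c : ℂ, ∀ ε : ℝ, 0 < ε → lam - 1 + ε ≠ 0 →
      ∃ C : ℝ, 0 < C ∧ ∀ r : ℝ, 1 ≤ r →
        |intCnt μ c r - intCnt μ 0 r| ≤ C * (1 + r ^ (lam - 1 + ε)) ∧
        intCnt μ 0 (r + ‖c‖) ≤ intCnt μ 0 r + C * (1 + r ^ (lam - 1 + ε)) := by
  intro c ε hε hne
  have hlam0 : 0 ≤ lam := hlam ▸ limsup_logPlus_div_log_nonneg hbdd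
  have he : 0 ≤ lam + ε := by linarith
  have he1 : lam + ε ≠ 1 := fun h => hne (by linarith)
  obtain ⟨C₀, hC₀, hN⟩ := exists_le_mul_rpow_of_limsup_lt (intCnt_monotoneOn μ 0) he hbdd
    (by linarith)
  set C₁ := C₀ * 2 ^ (lam + ε) / Real.log 2
  have hC₁ : 0 ≤ C₁ := by positivity
  have hn₀ := le_mul_rpow_of_integral_div_self_le (ballCnt_mono μ 0) (ballCnt_nonneg μ 0) hN
  obtain ⟨D₁, hD₁, h₁⟩ := intCnt_le_intCnt_add μ c 0 hC₁ he he1 hn₀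
  obtain ⟨D₂, hD₂, h₂⟩ := intCnt_le_intCnt_add μ 0 c (by positivity) he he1
    (ballCnt_le_mul_rpow_of_le μ c hC₁ he hn₀)
  set K := C₁ * (1 + ‖c‖) ^ (lam + ε) * ‖c‖
  have hK : 0 ≤ K := by positivity
  refine ⟨D₁ + D₂ + K + 1, by positivity, fun r hr => ?_⟩
  have htail := intCnt_add_le μ hC₁ (norm_nonneg c) he hn₀ hr
  have hX : 0 ≤ r ^ (lam + ε - 1) := Real.rpow_nonneg (by linarith) _
  have h₁ := h₁ r hr
  have h₂ := h₂ r hr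
  rw [show lam - 1 + ε = lam + ε - 1 by ring, abs_sub_le_iff]
  refine ⟨⟨?_, ?_⟩, ?_⟩ <;> nlinarith
end

section
/- Let f be a meromorphic function on ℂ, let c₁, …, c_n be non-zero complex numbers, let I ⊆ ℕ^{n+1} be a finite non-empty index set with meromorphic coefficients a_λ for λ ∈ I, and set P(z,f⃗) = Σ_{λ∈I} a_λ(z)·f(z)^{λ₀}·f(z+c₁)^{λ₁}⋯f(z+c_n)^{λ_n}, with total degree deg(P) = max_{λ∈I} |λ| where |λ| = λ₀ + λ₁ + ⋯ + λ_n. Then for every r > 0: m(r, P(·,f⃗)) ≤ deg(P)·m(r,f) + (Σ_{λ∈I} |λ|)·Σ_{j=1}^n m(r, f_{c_j}/f) + Σ_{λ∈I} m(r, a_λ) + deg(P)·log(2·|I|), where |I| is the number of elements of I. -/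
open MeasureTheory Filter Metric

/-!
On the circle `|z| = r`, rewrite each monomial as `a_λ f^|λ| ∏ (f_{c_j} / f)^{λ_j}`, so that its
`log⁺` is at most `log⁺ |a_λ| + |λ| log⁺ |f| + Σ λ_j log⁺ |f_{c_j} / f|`, and bound `log⁺` of the
sum by `log |I|` plus `log⁺` of its largest term. Averaging over the circle gives the estimate, with
`log |I| ≤ deg P · log (2 |I|)`. The rewriting is only valid where `f z = 0` forces
`f (z + c_j) = 0`; if `f ≢ 0` this excludes a discrete set of zeros, and if `f ≡ 0` nothing.
-/

open Real

lemma nevProx_eq_circleAverage (g : ℂ → ℂ) (r : ℝ) :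
    nevProx g r = circleAverage (fun z => log⁺ ‖g z‖) 0 r := by
  simp [nevProx, circleAverage, circleMap, logPlus, posLog]

theorem Real.circleAverage_mono_codiscreteWithin {c : ℂ} {R : ℝ} {f₁ f₂ : ℂ → ℝ}
    (hf₁ : CircleIntegrable f₁ c R) (hf₂ : CircleIntegrable f₂ c R)
    (h : ∀ᶠ z in codiscreteWithin (sphere c |R|), f₁ z ≤ f₂ z) (hR : R ≠ 0) :
    circleAverage f₁ c R ≤ circleAverage f₂ c R := by
  rw [circleAverage, circleAverage, smul_eq_mul, smul_eq_mul]
  gcongr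
  apply intervalIntegral.integral_mono_ae_restrict two_pi_pos.le hf₁ hf₂
  apply ae_restrict_le_codiscreteWithin measurableSet_Icc
  exact codiscreteWithin_mono (Set.subset_univ _) (circleMap_preimage_codiscrete hR h)

theorem Meromorphic.eventually_codiscrete_eq_zero_imp_add_const_eq_zero {𝕜 E : Type*}
    [RCLike 𝕜] [NormedAddCommGroup E] [NormedSpace 𝕜 E] {f : 𝕜 → E} (hf : Meromorphic f)
    (c : 𝕜) :
    ∀ᶠ z in codiscrete 𝕜, f z = 0 → f (z + c) = 0 := by
  by_cases hfin : ∀ u, meromorphicOrderAt f u ≠ ⊤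
  · filter_upwards [(hf.meromorphicOn (s := Set.univ)).eventually_codiscreteWithin_apply_ne_zero
      fun u _ => hfin u] with z hz hz0 using absurd hz0 hz
  · have htop (u : 𝕜) : meromorphicOrderAt (f ∘ (· + c)) u = ⊤ := by
      rw [meromorphicOrderAt_comp_add_const_eq_meromorphicOrderAt]
      by_contra h
      exact hfin (hf.exists_meromorphicOrderAt_ne_top_iff_forall.mp ⟨_, h⟩)
    rw [Filter.codiscrete, Filter.eventually_iff, mem_codiscreteWithin_iff_forall_mem_nhdsNE]
    intro u _
    filter_upwards [meromorphicOrderAt_eq_top_iff.mp (htop u)] with z hz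
    exact Or.inl fun _ => hz

theorem Real.exists_posLog_norm_sum_le {E ι : Type*} [SeminormedAddCommGroup E] {s : Finset ι}
    (hs : s.Nonempty) (x : ι → E) :
    ∃ i ∈ s, log⁺ ‖∑ i ∈ s, x i‖ ≤ log s.card + log⁺ ‖x i‖ := by
  obtain ⟨i, hi, hmax⟩ := s.exists_max_image (‖x ·‖) hs
  refine ⟨i, hi, ?_⟩
  calc log⁺ ‖∑ i ∈ s, x i‖ ≤ log⁺ (s.card * ‖x i‖) := by
        apply posLog_le_posLog (norm_nonneg _)
        simpa using (norm_sum_le s x).trans (s.sum_le_card_nsmul _ _ hmax)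
    _ ≤ log s.card + log⁺ ‖x i‖ := posLog_nat_mul

theorem Real.posLog_norm_monomial_le {𝕜 : Type*} [NormedField 𝕜] {n : ℕ} (a w : 𝕜)
    (v : Fin n → 𝕜) (k : Fin (n + 1) → ℕ) (hv : ∀ j, w = 0 → v j = 0) :
    log⁺ ‖a * w ^ k 0 * ∏ j, v j ^ k j.succ‖ ≤
      log⁺ ‖a‖ + (∑ i, k i : ℕ) * log⁺ ‖w‖ + ∑ j, k j.succ * log⁺ ‖v j / w‖ := by
  have hmonomial : a * w ^ k 0 * ∏ j, v j ^ k j.succ =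
      a * w ^ (∑ i, k i) * ∏ j, (v j / w) ^ k j.succ := by
    conv_lhs => rw [← Finset.prod_congr rfl fun j _ => by rw [← div_mul_cancel_of_imp (hv j)]]
    rw [Fin.sum_univ_succ, pow_add, ← Finset.prod_pow_eq_pow_sum]
    simp only [mul_pow, Finset.prod_mul_distrib]
    ring
  rw [hmonomial, norm_mul, norm_mul, norm_pow, norm_prod]
  grw [posLog_mul, posLog_mul, posLog_pow, posLog_prod]
  simp only [norm_pow, posLog_pow, le_refl]

theorem Real.posLog_norm_sum_monomial_le {𝕜 : Type*} [NormedField 𝕜] {n : ℕ}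
    (I : Finset (Fin (n + 1) → ℕ)) (a : (Fin (n + 1) → ℕ) → 𝕜) (w : 𝕜) (v : Fin n → 𝕜)
    (hv : ∀ j, w = 0 → v j = 0) :
    log⁺ ‖∑ k ∈ I, a k * w ^ k 0 * ∏ j, v j ^ k j.succ‖ ≤
      ((I.sup fun k => ∑ i, k i : ℕ) : ℝ) * log⁺ ‖w‖
        + ((∑ k ∈ I, ∑ i, k i : ℕ) : ℝ) * ∑ j, log⁺ ‖v j / w‖
        + ∑ k ∈ I, log⁺ ‖a k‖ + log I.card := by
  rcases I.eq_empty_or_nonempty with rfl | hI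
  · simp
  obtain ⟨k, hk, hsum⟩ :=
    exists_posLog_norm_sum_le hI fun k => a k * w ^ k 0 * ∏ j, v j ^ k j.succ
  have hdeg : ((∑ i, k i : ℕ) : ℝ) ≤ (I.sup fun k => ∑ i, k i : ℕ) := by
    exact_mod_cast I.le_sup (f := fun k => ∑ i, k i) hk
  have hexp (j : Fin n) : (k j.succ : ℝ) ≤ (∑ k ∈ I, ∑ i, k i : ℕ) := by
    exact_mod_cast (Finset.single_le_sum (fun i _ => Nat.zero_le (k i))
      (Finset.mem_univ j.succ)).trans (Finset.single_le_sum
        (f := fun k : Fin (n + 1) → ℕ => ∑ i, k i) (fun _ _ => Nat.zero_le _) hk)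
  have hcoeff : log⁺ ‖a k‖ ≤ ∑ k ∈ I, log⁺ ‖a k‖ :=
    Finset.single_le_sum (f := fun k => log⁺ ‖a k‖) (fun _ _ => posLog_nonneg) hk
  have hquot : ∑ j, (k j.succ : ℝ) * log⁺ ‖v j / w‖ ≤
      ((∑ k ∈ I, ∑ i, k i : ℕ) : ℝ) * ∑ j, log⁺ ‖v j / w‖ := by
    rw [Finset.mul_sum]
    exact Finset.sum_le_sum fun j _ => mul_le_mul_of_nonneg_right (hexp j) posLog_nonneg
  grw [hsum, posLog_norm_monomial_le _ _ _ _ hv, hdeg, hcoeff, hquot]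
  · linarith
  · exact posLog_nonneg

theorem Finset.log_card_le_sup_sum_mul_log_two_mul_card {m : ℕ} (I : Finset (Fin m → ℕ)) :
    log I.card ≤ ((I.sup fun k => ∑ i, k i : ℕ) : ℝ) * log (2 * I.card) := by
  rcases Nat.eq_zero_or_pos (I.sup fun k => ∑ i, k i) with hdeg | hdeg
  · have hI : I ⊆ {0} := fun k hk => by
      have := Finset.sum_eq_zero_iff.mp
        (Nat.le_zero.mp (hdeg ▸ I.le_sup (f := fun k => ∑ i, k i) hk))
      simpa [funext_iff] using this
    rw [hdeg, Nat.cast_zero, zero_mul]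
    exact log_nonpos (Nat.cast_nonneg _) (by exact_mod_cast Finset.card_le_card hI)
  · rcases I.eq_empty_or_nonempty with rfl | hI
    · simp
    have hcard : (1 : ℝ) ≤ I.card := by exact_mod_cast hI.card_pos
    calc log I.card ≤ log (2 * I.card) := log_le_log (by positivity) (by linarith)
      _ ≤ _ := le_mul_of_one_le_left (log_nonneg (by linarith)) (by exact_mod_cast hdeg)
theorem proximity_of_difference_polynomial_general
    (f : ℂ → ℂ) (hf : MeromorphicOn f Set.univ)
    (n : ℕ) (c : Fin n → ℂ)
    (I : Finset (Fin (n + 1) → ℕ))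
    (a : (Fin (n + 1) → ℕ) → ℂ → ℂ)
    (ha : ∀ lam ∈ I, MeromorphicOn (a lam) Set.univ)
    (r : ℝ) (hr : 0 < r) :
    nevProx (fun z => ∑ lam ∈ I,
        a lam z * f z ^ lam 0 * ∏ j : Fin n, f (z + c j) ^ lam j.succ) r ≤
      ((I.sup fun lam => ∑ j : Fin (n + 1), lam j : ℕ) : ℝ) * nevProx f r
        + ((∑ lam ∈ I, ∑ j : Fin (n + 1), lam j : ℕ) : ℝ) *
            (∑ j : Fin n, nevProx (fun z => f (z + c j) / f z) r)
        + (∑ lam ∈ I, nevProx (a lam) r)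
        + ((I.sup fun lam => ∑ j : Fin (n + 1), lam j : ℕ) : ℝ) *
            Real.log (2 * (I.card : ℝ)) := by
  replace hf : Meromorphic f := meromorphicOn_univ.mp hf
  replace ha (k) (hk : k ∈ I) : Meromorphic (a k) := meromorphicOn_univ.mp (ha k hk)
  have hshift (j : Fin n) : Meromorphic (fun z => f (z + c j)) :=
    Meromorphic.meromorphic_fun_comp_add_const_iff_meromorphic.mpr hf
  have hcircle {g : ℂ → ℂ} (hg : Meromorphic g) : CircleIntegrable (log⁺ ‖g ·‖) 0 r :=
    hg.meromorphicOn.circleIntegrable_posLog_norm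
  have hP : Meromorphic fun z => ∑ k ∈ I, a k z * f z ^ k 0 * ∏ j, f (z + c j) ^ k j.succ :=
    .fun_sum fun k hk => ((ha k hk).fun_mul hf.fun_pow).fun_mul
      (.fun_prod fun j _ => (hshift j).fun_pow)
  have hF := hcircle hf
  have hQ : CircleIntegrable (fun z => ∑ j, log⁺ ‖f (z + c j) / f z‖) 0 r :=
    .fun_sum _ fun j _ => hcircle ((hshift j).fun_div hf)
  have hA : CircleIntegrable (fun z => ∑ k ∈ I, log⁺ ‖a k z‖) 0 r :=
    .fun_sum I fun k hk => hcircle (ha k hk)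
  simp only [nevProx_eq_circleAverage]
  grw [← I.log_card_le_sup_sum_mul_log_two_mul_card]
  set D : ℝ := ((I.sup fun k => ∑ i, k i : ℕ) : ℝ)
  set S : ℝ := ((∑ k ∈ I, ∑ i, k i : ℕ) : ℝ)
  -- `•` rather than `*`, so that `circleAverage_fun_smul` applies
  calc _ ≤ circleAverage (fun z => D • log⁺ ‖f z‖ + S • ∑ j, log⁺ ‖f (z + c j) / f z‖
          + ∑ k ∈ I, log⁺ ‖a k z‖ + log I.card) 0 r := by
        refine circleAverage_mono_codiscreteWithin (hcircle hP) (by fun_prop) ?_ hr.ne'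
        filter_upwards [codiscreteWithin_mono (Set.subset_univ _) (Filter.eventually_all.mpr
          fun j => hf.eventually_codiscrete_eq_zero_imp_add_const_eq_zero (c j))] with z hz
        exact posLog_norm_sum_monomial_le I (a · z) (f z) (fun j => f (z + c j)) hz
    _ = _ := by
        rw [circleAverage_fun_add (by fun_prop) (by fun_prop),
          circleAverage_fun_add (by fun_prop) (by fun_prop),
          circleAverage_fun_add (by fun_prop) (by fun_prop), circleAverage_fun_smul,
          circleAverage_fun_smul, circleAverage_fun_sum (fun j _ => hcircle ((hshift j).fun_div hf)),
          circleAverage_fun_sum (fun k hk => hcircle (ha k hk)), circleAverage_const]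
        rfl

theorem proximity_of_difference_polynomial
    (f : ℂ → ℂ) (hf : MeromorphicOn f Set.univ)
    (n : ℕ) (c : Fin n → ℂ) (hc : ∀ j : Fin n, c j ≠ 0)
    (I : Finset (Fin (n + 1) → ℕ)) (hI : I.Nonempty)
    (a : (Fin (n + 1) → ℕ) → ℂ → ℂ)
    (ha : ∀ lam ∈ I, MeromorphicOn (a lam) Set.univ)
    (r : ℝ) (hr : 0 < r) :
    nevProx (fun z => ∑ lam ∈ I,
        a lam z * f z ^ lam 0 * ∏ j : Fin n, f (z + c j) ^ lam j.succ) r ≤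
      ((I.sup fun lam => ∑ j : Fin (n + 1), lam j : ℕ) : ℝ) * nevProx f r
        + ((∑ lam ∈ I, ∑ j : Fin (n + 1), lam j : ℕ) : ℝ) *
            (∑ j : Fin n, nevProx (fun z => f (z + c j) / f z) r)
        + (∑ lam ∈ I, nevProx (a lam) r)
        + ((I.sup fun lam => ∑ j : Fin (n + 1), lam j : ℕ) : ℝ) *
            Real.log (2 * (I.card : ℝ)) :=
  proximity_of_difference_polynomial_general f hf n c I a ha r hr
end
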